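/- arXiv:2005.02250 — 4 statements merged into one kernel-verified Lean document; each statement's English description precedes it below -/
import Mathlib

section
/- Every finite (P5, C4)-free graph G with at least one vertex satisfies χ(G) ≤ ⌈(5·ω(G) − 1)/4⌉. -/
open SimpleGraph

/-- `G` is `H`-free: no induced subgraph of `G` is isomorphic to `H`. -/
def IndFree {α β : Type*} (H : SimpleGraph α) (G : SimpleGraph β) : Prop :=
  ∀ s : Set β, ¬ Nonempty (H ≃g G.induce s)

/-- The banner: a 4-cycle `0-1-2-3-0` together with a pendant vertex `4` adjacent to `0`. -/
def banner : SimpleGraph (Fin 5) :=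
  SimpleGraph.fromEdgeSet {s(0,1), s(1,2), s(2,3), s(3,0), s(0,4)}

/-- The co-banner: the complement of the banner. -/
def coBanner : SimpleGraph (Fin 5) := bannerᶜ

/-- `2K₂`: the disjoint union of two edges. -/
def twoK2 : SimpleGraph (Fin 4) := SimpleGraph.fromEdgeSet {s(0,1), s(2,3)}

/-- `3K₁`: three pairwise nonadjacent vertices. -/
def threeK1 : SimpleGraph (Fin 3) := ⊥

/-- The 5-wheel: a 5-cycle `0-1-2-3-4-0` plus a hub `5` adjacent to all cycle vertices. -/
def wheel5 : SimpleGraph (Fin 6) :=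
  SimpleGraph.fromEdgeSet
    {s(0,1), s(1,2), s(2,3), s(3,4), s(4,0), s(5,0), s(5,1), s(5,2), s(5,3), s(5,4)}

/-- A nonempty set `M` is a module if every vertex outside `M` is adjacent to all
or to none of the vertices of `M`. -/
def IsModule {V : Type*} (G : SimpleGraph V) (M : Set V) : Prop :=
  M.Nonempty ∧ ∀ v ∉ M, (∀ u ∈ M, G.Adj v u) ∨ (∀ u ∈ M, ¬ G.Adj v u)

/-- `X` is a clique-separator of modules in `G`. -/
def IsCliqueSeparatorOfModules {V : Type*} (G : SimpleGraph V) (X : Set V) : Prop :=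
  (∃ (k : ℕ) (Xs : Fin k → Set V),
      (∀ i, IsModule G (Xs i)) ∧
      (∀ i j, i ≠ j → Disjoint (Xs i) (Xs j)) ∧
      (∀ i j, i ≠ j → ∀ u ∈ Xs i, ∀ v ∈ Xs j, G.Adj u v) ∧
      X = ⋃ i, Xs i) ∧
  (∃ A B : Set V, A ∪ B = Set.univ ∧ (A \ B).Nonempty ∧ (B \ A).Nonempty ∧
      (∀ a ∈ A \ B, ∀ b ∈ B \ A, ¬ G.Adj a b) ∧ A ∩ B = X)

/-- A graph is prime if it has no homogeneous set,
i.e. no module `M` with `1 < |M| < |V(G)|`. -/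
def IsPrime {V : Type*} (G : SimpleGraph V) : Prop :=
  ¬ ∃ M : Set V, IsModule G M ∧ 1 < M.ncard ∧ M.ncard < Nat.card V

/-- A nonempty graph is critical if deleting any vertex decreases the chromatic number. -/
def IsCritical {V : Type*} (G : SimpleGraph V) : Prop :=
  Nonempty V ∧ ∀ v : V, (G.induce {u | u ≠ v}).chromaticNumber < G.chromaticNumber

/-- `G` is a `non-empty, 2K₁-free'-expansion of `G'`: the fibres of `f` partition `V(G)`
into nonempty cliques, with complete/empty bipartite connections according to `G'`. -/
def IsExpansionOf {V W : Type*} (G : SimpleGraph V) (G' : SimpleGraph W) : Prop :=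
  ∃ f : V → W, Function.Surjective f ∧
    (∀ u v, u ≠ v → f u = f v → G.Adj u v) ∧
    (∀ u v, f u ≠ f v → (G.Adj u v ↔ G'.Adj (f u) (f v)))

/-- The weighted chromatic number `χ_q(G)`: the least `k` such that every vertex `v`
can be assigned a set of `q v` colours from `{1,…,k}` with disjoint sets on adjacent
vertices. -/
noncomputable def wChromaticNumber {V : Type*} (G : SimpleGraph V) (q : V → ℕ) : ℕ :=
  sInf {k | ∃ L : V → Finset (Fin k), (∀ v, (L v).card = q v) ∧
    ∀ ⦃u v⦄, G.Adj u v → Disjoint (L u) (L v)}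

/-- The weighted clique number `ω_q(G)`: the maximum total weight of a clique. -/
noncomputable def wCliqueNum {V : Type*} (G : SimpleGraph V) (q : V → ℕ) : ℕ :=
  sSup {m | ∃ s : Finset V, G.IsClique (s : Set V) ∧ m = ∑ v ∈ s, q v}

/-- `Q(F)`: a path `u₁u₂u₃u₄` whose third vertex `u₃` has been replaced by a copy of `F`,
each of whose vertices is adjacent to both `u₂` and `u₄`. Here `inr 0 = u₁`, `inr 1 = u₂`,
`inr 2 = u₄`, and `inl w` are the vertices of the copy of `F`. -/
def QGraph {W : Type*} (F : SimpleGraph W) : SimpleGraph (W ⊕ Fin 3) :=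
  SimpleGraph.fromRel (fun a b =>
    (∃ w w', a = Sum.inl w ∧ b = Sum.inl w' ∧ F.Adj w w') ∨
    (a = Sum.inr 0 ∧ b = Sum.inr 1) ∨
    (∃ w, a = Sum.inl w ∧ (b = Sum.inr 1 ∨ b = Sum.inr 2)))

/-- The join of two graphs: all edges of both graphs plus all edges in between. -/
def joinGraph {α β : Type*} (G₁ : SimpleGraph α) (G₂ : SimpleGraph β) :
    SimpleGraph (α ⊕ β) :=
  SimpleGraph.fromRel (fun a b =>
    (∃ u v, a = Sum.inl u ∧ b = Sum.inl v ∧ G₁.Adj u v) ∨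
    (∃ u v, a = Sum.inr u ∧ b = Sum.inr v ∧ G₂.Adj u v) ∨
    (∃ u v, a = Sum.inl u ∧ b = Sum.inr v))

/-- `H` has a spanning complete bipartite subgraph. -/
def HasSpanningCompleteBipartite {α : Type*} (H : SimpleGraph α) : Prop :=
  ∃ A B : Set α, A.Nonempty ∧ B.Nonempty ∧ Disjoint A B ∧ A ∪ B = Set.univ ∧
    ∀ a ∈ A, ∀ b ∈ B, H.Adj a b

/-- `G'` is a `q`-expansion of `G`: each vertex `u` of `G` is replaced by a clique on
`q u` vertices, joined completely or not at all according to adjacency in `G`. -/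
def IsWeightedExpansion {V' V : Type*} (G' : SimpleGraph V') (G : SimpleGraph V)
    (q : V → ℕ) : Prop :=
  ∃ f : V' → V,
    (∀ v : V, Nat.card (f ⁻¹' {v}) = q v) ∧
    (∀ a b : V', a ≠ b → f a = f b → G'.Adj a b) ∧
    (∀ a b : V', f a ≠ f b → (G'.Adj a b ↔ G.Adj (f a) (f b)))

/-- `q` is `⊲`-minimal: no weight function pointwise at most `q` with strictly smaller
total weight has the same weighted chromatic number. -/
def IsTriMinimal {V : Type*} [Fintype V] (G : SimpleGraph V) (q : V → ℕ) : Prop :=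
  ¬ ∃ q' : V → ℕ, (∀ v, q' v ≤ q v) ∧ (∑ v, q' v) < (∑ v, q v) ∧
      wChromaticNumber G q' = wChromaticNumber G q


/-!
Induction on `|V|`, proving `G.Colorable k` whenever `5 ω(G) ≤ 4 k + 1`.

Without an induced `C₅`, a vertex `w` minimising its closed neighbourhood is simplicial: two
non-adjacent neighbours `x`, `y` of `w` would have neighbours `x'`, `y'` outside `N[w]`, and
`w, x, x', y', y` would span a `C₄`, a `C₅` or a `P₅`. So `N(w)` is a clique and `w` is coloured
last.

For an induced `C₅` `v`, every other vertex is complete to it (`T`), anticomplete to it (`R`), or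
adjacent to exactly `v (i - 1), v i, v (i + 1)` for some `i`. Together with `v i` the latter form
cliques `Bᵢ` making up a blow-up of `C₅`, complete to `T` and anticomplete to `R`. Colour `T ∪ R`
by induction; the at least `k - |T|` colours unused on the clique `T` suffice for the blow-up,
because `|Bᵢ| + |Bᵢ₊₁| ≤ ω - |T|` and `∑ |Bᵢ| ≤ 5 (ω - |T|) / 2 ≤ 2 (k - |T|)`. A blow-up of `C₅`
with clique sizes `bᵢ` is `m`-colourable when `bᵢ + bᵢ₊₁ ≤ m` and `∑ bᵢ ≤ 2 m`: if some `bᵢ`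
vanishes it is a blow-up of a path, coloured greedily; otherwise some edge `i, i + 1` has slack,
and one colour can be given to both `Bᵢ₊₂` and `Bᵢ₊₄`, which lowers `m` by one.
-/

open Finset

theorem Set.ncard_image_preimage_val_le {V β : Type*} [Finite V] {A : Set V} (f : A → β)
    (s : Set V) : (f '' (Subtype.val ⁻¹' s)).ncard ≤ s.ncard :=
  (ncard_image_le (toFinite _)).trans <| ncard_le_ncard_of_injOn _ (fun _ h => h)
    Subtype.val_injective.injOn

theorem IndFree.not_isIndContained {α β : Type*} {H : SimpleGraph α} {G : SimpleGraph β}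
    (h : IndFree H G) : ¬ H ⊴ G := by
  rw [isIndContained_iff_exists_iso_induce]
  rintro ⟨s, hs⟩
  exact h s hs

/-- Applied to the set of cycle vertices adjacent to a vertex off an induced `C₅`: the two
hypotheses are what `C₄`- and `P₅`-freeness give. -/
theorem fin_five_eq_empty_or_univ_or_arc : ∀ s : Finset (Fin 5),
    (∀ k ∈ s, k + 2 ∈ s → k + 1 ∈ s) → (∀ k ∈ s, k + 1 ∈ s ∨ k + 2 ∈ s ∨ k + 3 ∈ s) →
    s = ∅ ∨ s = univ ∨ ∃ i, i + 4 ∈ s ∧ i + 1 ∈ s ∧ i + 2 ∉ s ∧ i + 3 ∉ s := by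
  decide

section WeightedCycle

variable {α : Type*}

/-- `S i` is the set of colours, taken from `F`, of the `b i` vertices blown up from vertex `i`
of `C₅`. -/
def IsCycleFiveWeightedColoring (F : Finset α) (b : Fin 5 → ℕ) (S : Fin 5 → Finset α) : Prop :=
  (∀ i, S i ⊆ F) ∧ (∀ i, #(S i) = b i) ∧ ∀ i, Disjoint (S i) (S (i + 1))

namespace IsCycleFiveWeightedColoring

variable {F : Finset α} {b : Fin 5 → ℕ} {S : Fin 5 → Finset α}

theorem rotate (k : Fin 5) (h : IsCycleFiveWeightedColoring F (fun i => b (k + i)) S) :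
    IsCycleFiveWeightedColoring F b (fun i => S (i - k)) := by
  obtain ⟨hsub, hcard, hdisj⟩ := h
  refine ⟨fun i => hsub _, fun i => by simpa using hcard (i - k), fun i => ?_⟩
  simpa [sub_add_eq_add_sub] using hdisj (i - k)

theorem insert [DecidableEq α] {c : α} (hc : c ∈ F) (h2 : b 2 ≠ 0) (h4 : b 4 ≠ 0)
    (h : IsCycleFiveWeightedColoring (F.erase c) ![b 0, b 1, b 2 - 1, b 3, b 4 - 1] S) :
    IsCycleFiveWeightedColoring F b ![S 0, S 1, insert c (S 2), S 3, insert c (S 4)] := by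
  obtain ⟨hsub, hcard, hdisj⟩ := h
  have hcS (i : Fin 5) : c ∉ S i := fun hci => by simpa using hsub i hci
  have hsubF (i : Fin 5) : S i ⊆ F := (hsub i).trans (erase_subset c F)
  refine ⟨fun i => ?_, fun i => ?_, fun i => ?_⟩ <;> fin_cases i <;>
    simp [insert_subset_iff, hc, hsubF, card_insert_of_notMem, hcS, hcard, disjoint_insert_left,
      disjoint_insert_right]
  all_goals first | omega | exact hdisj _

end IsCycleFiveWeightedColoring

theorem exists_isCycleFiveWeightedColoring_of_eq_zero [DecidableEq α] (F : Finset α)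
    {b : Fin 5 → ℕ} (h0 : b 0 = 0) (hadj : ∀ i, b i + b (i + 1) ≤ #F) :
    ∃ S, IsCycleFiveWeightedColoring F b S := by
  have h01 := hadj 0; have h12 := hadj 1; have h23 := hadj 2; have h34 := hadj 3
  simp only [Fin.reduceAdd] at h01 h12 h23 h34
  obtain ⟨S₁, hS₁, hc₁⟩ := exists_subset_card_eq (s := F) (n := b 1) (by omega)
  obtain ⟨S₂, hS₂, hc₂⟩ := exists_subset_card_eq (s := F \ S₁) (n := b 2)
    (by rw [card_sdiff_of_subset hS₁]; omega)
  rw [subset_sdiff] at hS₂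
  obtain ⟨S₃, hS₃, hc₃⟩ := exists_subset_card_eq (s := F \ S₂) (n := b 3)
    (by rw [card_sdiff_of_subset hS₂.1]; omega)
  rw [subset_sdiff] at hS₃
  obtain ⟨S₄, hS₄, hc₄⟩ := exists_subset_card_eq (s := F \ S₃) (n := b 4)
    (by rw [card_sdiff_of_subset hS₃.1]; omega)
  rw [subset_sdiff] at hS₄
  refine ⟨![∅, S₁, S₂, S₃, S₄], fun i => ?_, fun i => ?_, fun i => ?_⟩ <;> fin_cases i <;>
    simp [*, hS₂.2.symm, hS₃.2.symm, hS₄.2.symm]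

theorem exists_isCycleFiveWeightedColoring_of_add_lt [DecidableEq α] {F : Finset α}
    {b : Fin 5 → ℕ} (h2 : b 2 ≠ 0) (h4 : b 4 ≠ 0) (h01 : b 0 + b 1 < #F)
    (hadj : ∀ i, b i + b (i + 1) ≤ #F) (hsum : ∑ i, b i ≤ 2 * #F)
    (ih : ∀ F' ⊂ F, ∀ b' : Fin 5 → ℕ, (∀ i, b' i + b' (i + 1) ≤ #F') → ∑ i, b' i ≤ 2 * #F' →
      ∃ S, IsCycleFiveWeightedColoring F' b' S) :
    ∃ S, IsCycleFiveWeightedColoring F b S := by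
  obtain ⟨c, hc⟩ : F.Nonempty := card_pos.1 (by omega)
  have hcard : #(F.erase c) = #F - 1 := card_erase_of_mem hc
  have := hadj 1; have := hadj 2; have := hadj 3; have := hadj 4
  simp only [Fin.reduceAdd, Fin.sum_univ_five] at *
  obtain ⟨S, hS⟩ := ih (F.erase c) (erase_ssubset hc) ![b 0, b 1, b 2 - 1, b 3, b 4 - 1]
    (fun i => by fin_cases i <;> simp [hcard] <;> omega) (by simp [hcard]; omega)
  exact ⟨_, hS.insert hc h2 h4⟩

theorem exists_isCycleFiveWeightedColoring [DecidableEq α] (F : Finset α) (b : Fin 5 → ℕ)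
    (hadj : ∀ i, b i + b (i + 1) ≤ #F) (hsum : ∑ i, b i ≤ 2 * #F) :
    ∃ S, IsCycleFiveWeightedColoring F b S := by
  induction F using Finset.strongInduction generalizing b with
  | H F ih =>
  have rotate (k : Fin 5) : (∃ S, IsCycleFiveWeightedColoring F (fun i => b (k + i)) S) →
      ∃ S, IsCycleFiveWeightedColoring F b S :=
    fun ⟨_, hS⟩ => ⟨_, hS.rotate k⟩
  have hadj_rotate (k i : Fin 5) : b (k + i) + b (k + (i + 1)) ≤ #F := by
    simpa [add_assoc] using hadj (k + i)
  have hsum_rotate (k : Fin 5) : ∑ i, b (k + i) ≤ 2 * #F := by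
    rwa [Fintype.sum_equiv (Equiv.addLeft k) (fun i => b (k + i)) b fun _ => rfl]
  by_cases hzero : ∃ k, b k = 0
  · obtain ⟨k, hk⟩ := hzero
    exact rotate k (exists_isCycleFiveWeightedColoring_of_eq_zero F (by simpa using hk)
      (hadj_rotate k))
  push Not at hzero
  -- Otherwise some edge has slack, since `∑ i, (b i + b (i + 1)) = 2 ∑ i, b i ≤ 4 #F`.
  obtain ⟨k, hk⟩ : ∃ k, b k + b (k + 1) < #F := by
    by_contra! h
    have := h 0; have := h 1; have := h 2; have := h 3; have := h 4; have := hzero 0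
    simp only [Fin.reduceAdd, Fin.sum_univ_five] at *
    omega
  exact rotate k (exists_isCycleFiveWeightedColoring_of_add_lt (hzero _) (hzero _)
    (by simpa using hk) (hadj_rotate k) (hsum_rotate k) ih)

end WeightedCycle

namespace SimpleGraph

section General

variable {V : Type*} {G : SimpleGraph V}

theorem isIndContained_of_adj_iff {W : Type*} {H : SimpleGraph W} (f : W → V)
    (hf : ∀ i j, G.Adj (f i) (f j) ↔ H.Adj i j) (hne : ∀ i j, i ≠ j → ¬ H.Adj i j → f i ≠ f j) :
    H ⊴ G := by
  refine ⟨⟨⟨f, fun i j hij => ?_⟩, hf _ _⟩⟩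
  by_contra hne'
  by_cases hadj : H.Adj i j
  · exact G.irrefl (hij ▸ (hf i j).2 hadj)
  · exact hne i j hne' hadj hij

theorem pathGraph_five_isIndContained {a b c d e : V} (hab : G.Adj a b) (hbc : G.Adj b c)
    (hcd : G.Adj c d) (hde : G.Adj d e) (hac : ¬ G.Adj a c) (had : ¬ G.Adj a d)
    (hae : ¬ G.Adj a e) (hbd : ¬ G.Adj b d) (hbe : ¬ G.Adj b e) (hce : ¬ G.Adj c e)
    (hac' : a ≠ c) (hbd' : b ≠ d) (hce' : c ≠ e) : pathGraph 5 ⊴ G := by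
  refine isIndContained_of_adj_iff ![a, b, c, d, e] (fun i j => ?_) (fun i j hij hH => ?_)
  · fin_cases i <;> fin_cases j <;> simp [pathGraph_adj, G.adj_comm, *]
  · fin_cases i <;> fin_cases j <;> simp [pathGraph_adj] at hij hH ⊢ <;> (try rintro rfl) <;>
      simp_all [G.adj_comm]

theorem cycleGraph_four_isIndContained {a b c d : V} (hab : G.Adj a b) (hbc : G.Adj b c)
    (hcd : G.Adj c d) (hda : G.Adj d a) (hac : ¬ G.Adj a c) (hbd : ¬ G.Adj b d)
    (hac' : a ≠ c) (hbd' : b ≠ d) : cycleGraph 4 ⊴ G := by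
  refine isIndContained_of_adj_iff ![a, b, c, d] (fun i j => ?_) (fun i j hij hH => ?_)
  · fin_cases i <;> fin_cases j <;> simp +decide [G.adj_comm, *, hda.symm]
  · fin_cases i <;> fin_cases j <;> simp +decide at hij hH ⊢ <;> (try rintro rfl) <;>
      simp_all [G.adj_comm]

theorem cycleGraph_five_isIndContained {a b c d e : V} (hab : G.Adj a b) (hbc : G.Adj b c)
    (hcd : G.Adj c d) (hde : G.Adj d e) (hea : G.Adj e a) (hac : ¬ G.Adj a c)
    (had : ¬ G.Adj a d) (hbd : ¬ G.Adj b d) (hbe : ¬ G.Adj b e) (hce : ¬ G.Adj c e)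
    (hac' : a ≠ c) (had' : a ≠ d) (hbd' : b ≠ d) (hbe' : b ≠ e) (hce' : c ≠ e) :
    cycleGraph 5 ⊴ G := by
  refine isIndContained_of_adj_iff ![a, b, c, d, e] (fun i j => ?_) (fun i j hij hH => ?_)
  · fin_cases i <;> fin_cases j <;> simp +decide [G.adj_comm, *, hea.symm]
  · fin_cases i <;> fin_cases j <;> simp +decide at hij hH ⊢ <;> simp_all [eq_comm]

theorem IsClique.ncard_le_cliqueNum [Finite V] {s : Set V} (h : G.IsClique s) :
    s.ncard ≤ G.cliqueNum := by
  have := Fintype.ofFinite V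
  classical
  rw [Set.ncard_eq_toFinset_card']
  exact IsClique.card_le_cliqueNum (tc := by simpa using h)

theorem nonempty_coloring_of_induce_compl {α : Type*} (A : Set V) (c₁ : (G.induce A).Coloring α)
    (c₂ : (G.induce Aᶜ).Coloring α)
    (h : ∀ x (hx : x ∈ A) y (hy : y ∈ Aᶜ), G.Adj x y → c₁ ⟨x, hx⟩ ≠ c₂ ⟨y, hy⟩) :
    Nonempty (G.Coloring α) := by
  classical
  refine ⟨Coloring.mk (fun x => if hx : x ∈ A then c₁ ⟨x, hx⟩ else c₂ ⟨x, hx⟩) fun {x y} hxy => ?_⟩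
  by_cases hx : x ∈ A <;> by_cases hy : y ∈ A <;> simp only [hx, hy, dite_true, dite_false]
  · exact c₁.valid hxy
  · exact h x hx y hy hxy
  · exact (h y hy x hx hxy.symm).symm
  · exact c₂.valid hxy

theorem exists_coloring_of_ncard_fiber_le {ι α : Type*} [Finite V] (H : SimpleGraph ι)
    (f : V → ι) (hf : ∀ x y, G.Adj x y → f x ≠ f y → H.Adj (f x) (f y))
    (S : ι → Finset α) (hS : ∀ i j, H.Adj i j → Disjoint (S i) (S j))
    (hcard : ∀ i, (f ⁻¹' {i}).ncard ≤ #(S i)) :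
    ∃ c : G.Coloring α, ∀ x, c x ∈ S (f x) := by
  have := Fintype.ofFinite V
  classical
  have g (i : ι) : {x // f x = i} ↪ S i :=
    (Function.Embedding.nonempty_of_card_le
      (by rw [← Nat.card_eq_fintype_card, Fintype.card_coe]; exact hcard i)).some
  have hg (x : V) {i : ι} (hx : f x = i) : (g i ⟨x, hx⟩ : α) = g (f x) ⟨x, rfl⟩ := by
    subst hx; rfl
  refine ⟨Coloring.mk (fun x => g (f x) ⟨x, rfl⟩) fun {x y} hxy hc => ?_, fun x => (g (f x) _).2⟩
  by_cases hfxy : f x = f y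
  · have := (g (f y)).injective (a₁ := ⟨x, hfxy⟩) (a₂ := ⟨y, rfl⟩)
      (Subtype.ext ((hg x hfxy).trans hc))
    exact G.ne_of_adj hxy (congrArg Subtype.val this)
  · exact Finset.disjoint_left.1 (hS _ _ (hf x y hxy hfxy)) (g (f x) _).2 (hc ▸ (g (f y) _).2)

end General

section Simplicial

variable {V : Type*} {G : SimpleGraph V}

theorem exists_adj_not_adj_of_forall_ncard_le [Finite V] {w x y : V}
    (hw : ∀ u, (insert w (G.neighborSet w)).ncard ≤ (insert u (G.neighborSet u)).ncard)
    (hx : G.Adj w x) (hy : G.Adj w y) (hxy : x ≠ y) (hnxy : ¬ G.Adj x y) :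
    ∃ x', G.Adj x x' ∧ ¬ G.Adj w x' ∧ x' ≠ w := by
  by_contra! h
  have hsub : insert x (G.neighborSet x) ⊆ insert w (G.neighborSet w) := by
    rintro u (rfl | hu)
    · exact Or.inr hx
    · by_cases hwu : G.Adj w u
      exacts [Or.inr hwu, Or.inl (h u hu hwu)]
  have hy' : y ∈ insert x (G.neighborSet x) :=
    Set.eq_of_subset_of_ncard_le hsub (hw x) ▸ Or.inr hy
  rcases hy' with rfl | hy'
  exacts [hxy rfl, hnxy hy']

theorem exists_isClique_neighborSet [Finite V] [Nonempty V] (hP5 : ¬ pathGraph 5 ⊴ G)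
    (hC4 : ¬ cycleGraph 4 ⊴ G) (hC5 : ¬ cycleGraph 5 ⊴ G) :
    ∃ w, G.IsClique (G.neighborSet w) := by
  obtain ⟨w, hw⟩ := Finite.exists_min fun u => (insert u (G.neighborSet u)).ncard
  refine ⟨w, fun x hx y hy hxy => ?_⟩
  by_contra hnxy
  obtain ⟨x', hxx', hwx', hx'w⟩ := exists_adj_not_adj_of_forall_ncard_le hw hx hy hxy hnxy
  obtain ⟨y', hyy', hwy', hy'w⟩ :=
    exists_adj_not_adj_of_forall_ncard_le hw hy hx hxy.symm (mt Adj.symm hnxy)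
  by_cases hx'y : G.Adj x' y
  · exact hC4 <| cycleGraph_four_isIndContained hx hxx' hx'y hy.symm hwx' hnxy hx'w.symm hxy
  by_cases hy'x : G.Adj y' x
  · exact hC4 <| cycleGraph_four_isIndContained hy hyy' hy'x hx.symm hwy' (mt Adj.symm hnxy)
      hy'w.symm hxy.symm
  by_cases hx'y' : G.Adj x' y'
  · exact hC5 <| cycleGraph_five_isIndContained hx hxx' hx'y' hyy'.symm hy.symm hwx' hwy'
      (mt Adj.symm hy'x) hnxy hx'y hx'w.symm hy'w.symm (by rintro rfl; exact hnxy hyy'.symm) hxy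
      (by rintro rfl; exact hnxy hxx')
  · exact hP5 <| pathGraph_five_isIndContained hxx'.symm hx.symm hy hyy' (mt Adj.symm hwx') hx'y
      hx'y' hnxy (mt Adj.symm hy'x) hwy' hx'w hxy hy'w.symm

theorem colorable_of_isClique_neighborSet [Finite V] {w : V} {k : ℕ}
    (hw : G.IsClique (G.neighborSet w)) (hk : G.cliqueNum ≤ k)
    (hcol : (G.induce {w}ᶜ).Colorable k) : G.Colorable k := by
  obtain ⟨c₁⟩ := hcol
  have hN : (G.neighborSet w).ncard < k := by
    have := (hw.insert fun u hu _ => hu).ncard_le_cliqueNum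
    rw [Set.ncard_insert_of_notMem (by simp)] at this
    omega
  obtain ⟨a, ha⟩ : ∃ a, a ∉ c₁ '' (Subtype.val ⁻¹' G.neighborSet w) := by
    by_contra! h
    have := (Set.ncard_image_preimage_val_le c₁ (G.neighborSet w)).trans_lt hN
    rw [Set.eq_univ_of_forall h, Set.ncard_univ, Nat.card_fin] at this
    exact this.false
  refine nonempty_coloring_of_induce_compl {w}ᶜ c₁
    (Coloring.mk (fun _ => a) fun {x y} hxy => ?_) fun x hx y hy hxy hc => ha ⟨⟨x, hx⟩, ?_, hc⟩
  · obtain ⟨x, hx⟩ := x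
    obtain ⟨y, hy⟩ := y
    simp only [compl_compl, Set.mem_singleton_iff] at hx hy
    subst hx hy
    exact absurd hxy (G.induce _).irrefl
  · simp only [compl_compl, Set.mem_singleton_iff] at hy
    subst hy
    exact hxy.symm

end Simplicial

def cycleGraph.addLeft (n : ℕ) (k : Fin (n + 2)) : cycleGraph (n + 2) ≃g cycleGraph (n + 2) where
  toEquiv := Equiv.addLeft k
  map_rel_iff' := by simp [cycleGraph_adj]

namespace Embedding

variable {V : Type*} {G : SimpleGraph V} (v : cycleGraph 5 ↪g G)

def cycleRotate (k : Fin 5) : cycleGraph 5 ↪g G := v.comp (cycleGraph.addLeft 3 k).toEmbedding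

@[simp] theorem cycleRotate_apply (k i : Fin 5) : v.cycleRotate k i = v (k + i) := rfl

/-- Here `i + 4 = i - 1`: the bag `B i` consists of the vertices adjacent to both cycle
neighbours of `v i` and to neither of the two other cycle vertices. It contains `v i`. -/
def cycleBag (i : Fin 5) : Set V :=
  {u | G.Adj u (v (i + 4)) ∧ G.Adj u (v (i + 1)) ∧ ¬ G.Adj u (v (i + 2)) ∧ ¬ G.Adj u (v (i + 3))}

def cycleComplete : Set V := {u | ∀ i, G.Adj u (v i)}

def cycleAnticomplete : Set V := {u | ∀ i, ¬ G.Adj u (v i)}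

variable {v} {u w : V}

@[simp] theorem mem_cycleBag {i : Fin 5} : u ∈ v.cycleBag i ↔
    G.Adj u (v (i + 4)) ∧ G.Adj u (v (i + 1)) ∧ ¬ G.Adj u (v (i + 2)) ∧ ¬ G.Adj u (v (i + 3)) :=
  Iff.rfl

/-- Facts about the bags are proved for `B 0` (and `B 1`, `B 2`) and transported by rotating the
cycle. -/
@[simp] theorem cycleBag_cycleRotate (k i : Fin 5) :
    (v.cycleRotate k).cycleBag i = v.cycleBag (k + i) := by
  ext u; simp [add_assoc]

theorem apply_zero_mem_cycleBag_zero : v 0 ∈ v.cycleBag 0 := by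
  simp +decide

theorem isClique_cycleBag_zero (hC4 : ¬ cycleGraph 4 ⊴ G) : G.IsClique (v.cycleBag 0) := by
  rintro u ⟨hu4, hu1, -, -⟩ w ⟨hw4, hw1, -, -⟩ huw
  by_contra h
  exact hC4 <| cycleGraph_four_isIndContained hu4 hw4.symm hw1 hu1.symm h (by simp +decide) huw
    (by simp +decide)

theorem adj_of_mem_cycleBag_zero_of_mem_cycleBag_one (hP5 : ¬ pathGraph 5 ⊴ G)
    (hu : u ∈ v.cycleBag 0) (hw : w ∈ v.cycleBag 1) : G.Adj u w := by
  simp only [mem_cycleBag, Fin.reduceAdd] at hu hw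
  obtain ⟨hu4, -, hu2, hu3⟩ := hu
  obtain ⟨-, hw2, hw3, hw4⟩ := hw
  by_contra h
  exact hP5 <| pathGraph_five_isIndContained hu4 (by simp +decide) (by simp +decide) hw2.symm hu3
    hu2 h (by simp +decide) (mt Adj.symm hw4) (mt Adj.symm hw3)
    (by rintro rfl; exact hu2 (by simp +decide)) (by simp +decide)
    (by rintro rfl; exact hw4 (by simp +decide))

theorem not_adj_of_mem_cycleBag_zero_of_mem_cycleBag_two (hC4 : ¬ cycleGraph 4 ⊴ G)
    (hu : u ∈ v.cycleBag 0) (hw : w ∈ v.cycleBag 2) : ¬ G.Adj u w := by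
  simp only [mem_cycleBag, Fin.reduceAdd] at hu hw
  obtain ⟨hu4, -, hu2, hu3⟩ := hu
  obtain ⟨hw1, hw3, hw4, -⟩ := hw
  intro h
  exact hC4 <| cycleGraph_four_isIndContained h hw3 (by simp +decide) hu4.symm hu3 hw4
    (by rintro rfl; exact hu2 (by simp +decide)) (by rintro rfl; exact absurd hw1 (by simp +decide))

theorem isClique_cycleComplete (hC4 : ¬ cycleGraph 4 ⊴ G) : G.IsClique v.cycleComplete := by
  intro u hu w hw huw
  by_contra h
  exact hC4 <| cycleGraph_four_isIndContained (hu 0) (hw 0).symm (hw 2) (hu 2).symm h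
    (by simp +decide) huw (by simp +decide)

theorem adj_of_mem_cycleComplete_of_mem_cycleBag_zero (hC4 : ¬ cycleGraph 4 ⊴ G)
    (hu : u ∈ v.cycleComplete) (hw : w ∈ v.cycleBag 0) : G.Adj u w := by
  simp only [mem_cycleBag, Fin.reduceAdd] at hw
  obtain ⟨hw4, hw1, hw2, -⟩ := hw
  by_contra h
  exact hC4 <| cycleGraph_four_isIndContained (hu 4) hw4.symm hw1 (hu 1).symm h
    (by simp +decide) (by rintro rfl; exact hw2 (hu 2)) (by simp +decide)

theorem not_adj_of_mem_cycleAnticomplete_of_mem_cycleBag_zero (hP5 : ¬ pathGraph 5 ⊴ G)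
    (hu : u ∈ v.cycleAnticomplete) (hw : w ∈ v.cycleBag 0) : ¬ G.Adj u w := by
  simp only [mem_cycleBag, Fin.reduceAdd] at hw
  obtain ⟨-, hw1, hw2, hw3⟩ := hw
  intro h
  exact hP5 <| pathGraph_five_isIndContained h hw1 (by simp +decide) (by simp +decide) (hu 1)
    (hu 2) (hu 3) hw2 hw3 (by simp +decide) (by rintro rfl; exact hu 2 (by simp +decide))
    (by rintro rfl; exact hw3 (by simp +decide)) (by simp +decide)

theorem adj_one_of_adj_zero_of_adj_two (hC4 : ¬ cycleGraph 4 ⊴ G) (hu : u ≠ v 1)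
    (h0 : G.Adj u (v 0)) (h2 : G.Adj u (v 2)) : G.Adj u (v 1) := by
  by_contra h1
  exact hC4 <| cycleGraph_four_isIndContained h0 (by simp +decide) (by simp +decide) h2.symm h1
    (by simp +decide) hu (by simp +decide)

theorem adj_of_adj_zero (hP5 : ¬ pathGraph 5 ⊴ G) (h0 : G.Adj u (v 0)) :
    G.Adj u (v 1) ∨ G.Adj u (v 2) ∨ G.Adj u (v 3) := by
  by_contra! h
  obtain ⟨h1, h2, h3⟩ := h
  exact hP5 <| pathGraph_five_isIndContained h0 (by simp +decide) (by simp +decide)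
    (by simp +decide) h1 h2 h3 (by simp +decide) (by simp +decide) (by simp +decide)
    (by rintro rfl; exact h2 (by simp +decide)) (by simp +decide) (by simp +decide)

theorem isClique_cycleBag (hC4 : ¬ cycleGraph 4 ⊴ G) (i : Fin 5) : G.IsClique (v.cycleBag i) := by
  simpa using (v.cycleRotate i).isClique_cycleBag_zero hC4

theorem adj_of_mem_cycleBag_of_mem_cycleBag_add_one (hP5 : ¬ pathGraph 5 ⊴ G) {i : Fin 5}
    (hu : u ∈ v.cycleBag i) (hw : w ∈ v.cycleBag (i + 1)) : G.Adj u w :=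
  (v.cycleRotate i).adj_of_mem_cycleBag_zero_of_mem_cycleBag_one hP5 (by simpa using hu)
    (by simpa using hw)

theorem not_adj_of_mem_cycleBag (hC4 : ¬ cycleGraph 4 ⊴ G) {i j : Fin 5} (hij : i ≠ j)
    (hnadj : ¬ (cycleGraph 5).Adj i j) (hu : u ∈ v.cycleBag i) (hw : w ∈ v.cycleBag j) :
    ¬ G.Adj u w := by
  have hji : ∀ i j : Fin 5, i ≠ j → ¬ (cycleGraph 5).Adj i j → j = i + 2 ∨ i = j + 2 := by decide
  obtain rfl | rfl := hji i j hij hnadj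
  · exact (v.cycleRotate i).not_adj_of_mem_cycleBag_zero_of_mem_cycleBag_two hC4
      (by simpa using hu) (by simpa using hw)
  · exact fun h => (v.cycleRotate j).not_adj_of_mem_cycleBag_zero_of_mem_cycleBag_two hC4
      (by simpa using hw) (by simpa using hu) h.symm

theorem adj_of_mem_cycleComplete_of_mem_cycleBag (hC4 : ¬ cycleGraph 4 ⊴ G) {i : Fin 5}
    (hu : u ∈ v.cycleComplete) (hw : w ∈ v.cycleBag i) : G.Adj u w :=
  (v.cycleRotate i).adj_of_mem_cycleComplete_of_mem_cycleBag_zero hC4 (fun _ => hu _)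
    (by simpa using hw)

theorem not_adj_of_mem_cycleAnticomplete_of_mem_cycleBag (hP5 : ¬ pathGraph 5 ⊴ G) {i : Fin 5}
    (hu : u ∈ v.cycleAnticomplete) (hw : w ∈ v.cycleBag i) : ¬ G.Adj u w :=
  (v.cycleRotate i).not_adj_of_mem_cycleAnticomplete_of_mem_cycleBag_zero hP5 (fun _ => hu _)
    (by simpa using hw)

theorem exists_mem_cycleBag (hP5 : ¬ pathGraph 5 ⊴ G) (hC4 : ¬ cycleGraph 4 ⊴ G)
    (hT : u ∉ v.cycleComplete) (hR : u ∉ v.cycleAnticomplete) : ∃ i, u ∈ v.cycleBag i := by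
  by_cases hu : u ∈ Set.range v
  · obtain ⟨j, rfl⟩ := hu
    exact ⟨j, by simpa using (v.cycleRotate j).apply_zero_mem_cycleBag_zero⟩
  classical
  let s : Finset (Fin 5) := {i | G.Adj u (v i)}
  have hC4s : ∀ k ∈ s, k + 2 ∈ s → k + 1 ∈ s := by
    simp only [s, mem_filter, mem_univ, true_and]
    intro k h0 h2
    simpa using (v.cycleRotate k).adj_one_of_adj_zero_of_adj_two hC4
      (fun h => hu ⟨_, h.symm⟩) (by simpa using h0) (by simpa using h2)
  have hP5s : ∀ k ∈ s, k + 1 ∈ s ∨ k + 2 ∈ s ∨ k + 3 ∈ s := by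
    simp only [s, mem_filter, mem_univ, true_and]
    intro k h0
    simpa using (v.cycleRotate k).adj_of_adj_zero hP5 (by simpa using h0)
  rcases fin_five_eq_empty_or_univ_or_arc s hC4s hP5s with hs | hs | ⟨i, hi⟩
  · exact (hR fun i hi => eq_empty_iff_forall_notMem.1 hs i (by simpa [s] using hi)).elim
  · exact (hT fun i => by simpa [s] using eq_univ_iff_forall.1 hs i).elim
  · exact ⟨i, by simpa [s] using hi⟩

theorem ncard_cycleBag_add_ncard_cycleBag_add_ncard_cycleComplete_le [Finite V]
    (hP5 : ¬ pathGraph 5 ⊴ G) (hC4 : ¬ cycleGraph 4 ⊴ G) (i : Fin 5) :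
    (v.cycleBag i).ncard + (v.cycleBag (i + 1)).ncard + v.cycleComplete.ncard ≤ G.cliqueNum := by
  have hBB {x y : V} (hx : x ∈ v.cycleBag i) (hy : y ∈ v.cycleBag (i + 1)) : G.Adj x y :=
    adj_of_mem_cycleBag_of_mem_cycleBag_add_one hP5 hx hy
  have hTB {x y : V} {j : Fin 5} (hx : x ∈ v.cycleComplete) (hy : y ∈ v.cycleBag j) : G.Adj x y :=
    adj_of_mem_cycleComplete_of_mem_cycleBag hC4 hx hy
  have hclique : G.IsClique (v.cycleBag i ∪ v.cycleBag (i + 1) ∪ v.cycleComplete) := by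
    have := G.symm
    refine Set.pairwise_union_of_symm.2 ⟨Set.pairwise_union_of_symm.2 ⟨isClique_cycleBag hC4 i,
      isClique_cycleBag hC4 (i + 1), fun x hx y hy _ => hBB hx hy⟩, isClique_cycleComplete hC4, ?_⟩
    rintro x (hx | hx) y hy -
    exacts [(hTB hy hx).symm, (hTB hy hx).symm]
  have hdisj₁ : Disjoint (v.cycleBag i) (v.cycleBag (i + 1)) :=
    Set.disjoint_left.2 fun x hx hx' => G.irrefl (hBB hx hx')
  have hdisj₂ : Disjoint (v.cycleBag i ∪ v.cycleBag (i + 1)) v.cycleComplete := by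
    refine Set.disjoint_right.2 fun x hx hx' => ?_
    rcases hx' with hx' | hx' <;> exact G.irrefl (hTB hx hx')
  rw [← Set.ncard_union_eq hdisj₁, ← Set.ncard_union_eq hdisj₂]
  exact hclique.ncard_le_cliqueNum

theorem exists_coloring_induce_cycleBags {α : Type*} [DecidableEq α] [Finite V]
    (hP5 : ¬ pathGraph 5 ⊴ G) (hC4 : ¬ cycleGraph 4 ⊴ G) (F : Finset α)
    (hF : 5 * G.cliqueNum ≤ 4 * #F + 5 * v.cycleComplete.ncard + 1) :
    ∃ c : (G.induce (v.cycleComplete ∪ v.cycleAnticomplete)ᶜ).Coloring α, ∀ x, c x ∈ F := by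
  have hclique := ncard_cycleBag_add_ncard_cycleBag_add_ncard_cycleComplete_le (v := v) hP5 hC4
  have h0 := hclique 0; have h1 := hclique 1; have h2 := hclique 2; have h3 := hclique 3
  have h4 := hclique 4
  simp only [Fin.reduceAdd] at h0 h1 h2 h3 h4
  obtain ⟨S, hSF, hScard, hSdisj⟩ := exists_isCycleFiveWeightedColoring F
    (fun i => (v.cycleBag i).ncard) (fun i => by have := hclique i; omega)
    (by simp only [Fin.sum_univ_five]; omega)
  have hbag (x : ↥(v.cycleComplete ∪ v.cycleAnticomplete)ᶜ) : ∃ i, x.1 ∈ v.cycleBag i :=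
    exists_mem_cycleBag hP5 hC4 (fun h => x.2 (Or.inl h)) (fun h => x.2 (Or.inr h))
  choose f hf using hbag
  have hC5adj : ∀ i j : Fin 5, (cycleGraph 5).Adj i j → j = i + 1 ∨ i = j + 1 := by decide
  obtain ⟨c, hc⟩ := exists_coloring_of_ncard_fiber_le (G := G.induce _) (cycleGraph 5) f
    (fun x y hxy hne => by
      by_contra h
      exact not_adj_of_mem_cycleBag hC4 hne h (hf x) (hf y) hxy)
    S (fun i j hij => by
      obtain rfl | rfl := hC5adj i j hij
      exacts [hSdisj i, (hSdisj j).symm])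
    (fun i => hScard i ▸ Set.ncard_le_ncard_of_injOn Subtype.val (fun x hx => hx ▸ hf x)
      Subtype.val_injective.injOn)
  exact ⟨c, fun x => hSF _ (hc x)⟩

end Embedding

variable {V : Type*} {G : SimpleGraph V}

theorem colorable_of_cycleGraph_five_embedding [Finite V] (hP5 : ¬ pathGraph 5 ⊴ G)
    (hC4 : ¬ cycleGraph 4 ⊴ G) (v : cycleGraph 5 ↪g G) {k : ℕ}
    (hk : 5 * G.cliqueNum ≤ 4 * k + 1)
    (hcol : (G.induce (v.cycleComplete ∪ v.cycleAnticomplete)).Colorable k) : G.Colorable k := by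
  classical
  obtain ⟨c₁⟩ := hcol
  set used := c₁ '' (Subtype.val ⁻¹' v.cycleComplete)
  have hF : 5 * G.cliqueNum ≤ 4 * #usedᶜ.toFinset + 5 * v.cycleComplete.ncard + 1 := by
    have h₁ := Set.ncard_add_ncard_compl used
    have h₂ : used.ncard ≤ v.cycleComplete.ncard := Set.ncard_image_preimage_val_le c₁ _
    rw [Nat.card_fin] at h₁
    rw [← Set.ncard_eq_toFinset_card']
    omega
  obtain ⟨c₂, hc₂⟩ := v.exists_coloring_induce_cycleBags hP5 hC4 _ hF
  refine nonempty_coloring_of_induce_compl _ c₁ c₂ fun x hx y hy hxy hc => ?_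
  rcases hx with hxT | hxR
  · exact Set.mem_toFinset.1 (hc₂ ⟨y, hy⟩) ⟨⟨x, _⟩, hxT, hc⟩
  · obtain ⟨i, hi⟩ :=
      Embedding.exists_mem_cycleBag hP5 hC4 (fun h => hy (Or.inl h)) (fun h => hy (Or.inr h))
    exact Embedding.not_adj_of_mem_cycleAnticomplete_of_mem_cycleBag hP5 hxR hi hxy

theorem colorable_of_pathGraph_five_cycleGraph_four_free [Finite V] (G : SimpleGraph V)
    (hP5 : ¬ pathGraph 5 ⊴ G) (hC4 : ¬ cycleGraph 4 ⊴ G) {k : ℕ}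
    (hk : 5 * G.cliqueNum ≤ 4 * k + 1) : G.Colorable k := by
  induction hn : Nat.card V using Nat.strong_induction_on generalizing V with
  | _ n ih =>
  have ih_induce (s : Set V) (hs : s ≠ Set.univ) : (G.induce s).Colorable k :=
    ih _ (hn ▸ Nat.card_coe_set_eq s ▸ Set.ncard_lt_card hs) (G.induce s)
      (fun h => hP5 (h.trans (Embedding.induce s).isIndContained))
      (fun h => hC4 (h.trans (Embedding.induce s).isIndContained))
      ((Nat.mul_le_mul_left 5 (G.cliqueNum_induce_le s)).trans hk) rfl
  by_cases hC5 : cycleGraph 5 ⊴ G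
  · obtain ⟨v⟩ := hC5
    refine colorable_of_cycleGraph_five_embedding hP5 hC4 v hk (ih_induce _ fun h => ?_)
    rcases h.symm ▸ Set.mem_univ (v 0) with h0 | h0
    exacts [G.irrefl (h0 0), h0 1 (by simp +decide)]
  · cases isEmpty_or_nonempty V
    · exact Colorable.of_isEmpty k
    · obtain ⟨w, hw⟩ := exists_isClique_neighborSet hP5 hC4 hC5
      exact colorable_of_isClique_neighborSet hw (by omega)
        (ih_induce _ (Set.compl_ne_univ.2 (Set.singleton_nonempty w)))

end SimpleGraph

theorem stmt3_general {V : Type} [Fintype V] (G : SimpleGraph V)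
    (hP5 : IndFree (pathGraph 5) G) (hC4 : IndFree (cycleGraph 4) G) :
    G.chromaticNumber ≤ (((5 * G.cliqueNum - 1 + 3) / 4 : ℕ) : ℕ∞) := by
  rw [chromaticNumber_le_iff_colorable]
  exact G.colorable_of_pathGraph_five_cycleGraph_four_free hP5.not_isIndContained
    hC4.not_isIndContained (by omega)

/-- Every finite `(P₅, C₄)`-free graph `G` with at least one vertex satisfies
`χ(G) ≤ ⌈(5·ω(G) − 1)/4⌉`. -/
theorem stmt3 {V : Type} [Fintype V] [Nonempty V] (G : SimpleGraph V)
    (hP5 : IndFree (pathGraph 5) G) (hC4 : IndFree (cycleGraph 4) G) :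
    G.chromaticNumber ≤ (((5 * G.cliqueNum - 1 + 3) / 4 : ℕ) : ℕ∞) :=
  stmt3_general G hP5 hC4
end

section
/- For every positive integer ω there exists a finite (P5, C4)-free graph G with clique number ω(G) = ω and chromatic number χ(G) = ⌈(5ω − 1)/4⌉. -/
open SimpleGraph

open Finset

/-!
Blow up each vertex of `C₅ᶜ ≅ C₅` into a clique, the `n` vertices being spread as evenly as
possible (vertex `m` goes to `m mod 5`). A blow-up of `C₅` by cliques is still `P₅`- and
`C₄`-free, because an induced copy of a graph without true twins meets every clique of the
blow-up at most once and hence already lives in `C₅`. A largest clique consists of two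
residue classes differing by `2`, so `ω = ⌈2n/5⌉`; independent sets have at most two vertices, so
`χ = ⌈n/2⌉`, attained by colouring `m ↦ m / 2`. Taking `n = 2⌈(5ω - 1)/4⌉ - 1` gives the claim.
-/

namespace SimpleGraph

variable {α V W : Type*}

def cliqueBlowup (H : SimpleGraph W) (f : V → W) : SimpleGraph V where
  Adj a b := a ≠ b ∧ (f a = f b ∨ H.Adj (f a) (f b))
  symm := ⟨fun _ _ ⟨hne, h⟩ ↦ ⟨hne.symm, h.imp Eq.symm fun h ↦ h.symm⟩⟩
  loopless := ⟨fun _ h ↦ h.1 rfl⟩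

def TrueTwinFree (F : SimpleGraph α) : Prop :=
  ∀ a b, F.Adj a b → ∃ c, c ≠ a ∧ c ≠ b ∧ ¬(F.Adj c a ↔ F.Adj c b)

variable {F : SimpleGraph α} {H : SimpleGraph W} {f : V → W}

@[simp] lemma cliqueBlowup_adj {a b : V} :
    (H.cliqueBlowup f).Adj a b ↔ a ≠ b ∧ (f a = f b ∨ H.Adj (f a) (f b)) := Iff.rfl

lemma indFree_iff_not_isIndContained {G : SimpleGraph V} : IndFree F G ↔ ¬F ⊴ G := by
  simp [IndFree, isIndContained_iff_exists_iso_induce]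

lemma TrueTwinFree.injective_comp (hF : F.TrueTwinFree) (e : F ↪g H.cliqueBlowup f) :
    Function.Injective (f ∘ e) := by
  intro a b hab
  by_contra hne
  obtain ⟨c, hca, hcb, hc⟩ :=
    hF a b (e.map_adj_iff.1 (cliqueBlowup_adj.2 ⟨e.injective.ne hne, Or.inl hab⟩))
  apply hc
  rw [← e.map_adj_iff, ← e.map_adj_iff, cliqueBlowup_adj, cliqueBlowup_adj,
    show f (e a) = f (e b) from hab]
  exact and_congr_left' (iff_of_true (e.injective.ne hca) (e.injective.ne hcb))

lemma TrueTwinFree.isIndContained_of_cliqueBlowup (hF : F.TrueTwinFree)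
    (h : F ⊴ H.cliqueBlowup f) : F ⊴ H := by
  obtain ⟨e⟩ := h
  have hinj := hF.injective_comp e
  refine ⟨⟨⟨f ∘ e, hinj⟩, fun {a b} ↦ ?_⟩⟩
  change H.Adj (f (e a)) (f (e b)) ↔ F.Adj a b
  rw [← e.map_adj_iff, cliqueBlowup_adj]
  by_cases hab : a = b
  · subst hab
    simp
  · exact ⟨fun h ↦ ⟨e.injective.ne hab, Or.inr h⟩, fun h ↦ h.2.resolve_left (hinj.ne hab)⟩

lemma TrueTwinFree.indFree_cliqueBlowup (hF : F.TrueTwinFree) (h : IndFree F H) :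
    IndFree F (H.cliqueBlowup f) := by
  rw [indFree_iff_not_isIndContained] at h ⊢
  exact fun hc ↦ h (hF.isIndContained_of_cliqueBlowup hc)

lemma IsIndContained.indepNum_le [Finite W] (h : F ⊴ H) : F.indepNum ≤ H.indepNum := by
  obtain ⟨e⟩ := h
  obtain ⟨s, hs⟩ := F.exists_isNIndepSet_indepNum
  rw [← hs.card_eq, ← card_map e.toEmbedding]
  refine IsIndepSet.card_le_indepNum ?_
  simp only [coe_map]
  rintro _ ⟨a, ha, rfl⟩ _ ⟨b, hb, rfl⟩ hne
  exact fun hadj ↦ hs.isIndepSet ha hb (fun h ↦ hne (congrArg e h)) (e.map_adj_iff.1 hadj)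

lemma indepNum_cliqueBlowup_le [Finite W] : (H.cliqueBlowup f).indepNum ≤ H.indepNum := by
  classical
  obtain ⟨s, hs⟩ := (H.cliqueBlowup f).exists_isNIndepSet_indepNum
  have hinj : Set.InjOn f s := fun a ha b hb hab ↦ by
    by_contra hne
    exact hs.isIndepSet ha hb hne (cliqueBlowup_adj.2 ⟨hne, Or.inl hab⟩)
  rw [← hs.card_eq, ← card_image_of_injOn hinj]
  refine IsIndepSet.card_le_indepNum ?_
  simp only [coe_image]
  rintro _ ⟨a, ha, rfl⟩ _ ⟨b, hb, rfl⟩ hne hadj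
  exact hs.isIndepSet ha hb (fun h ↦ hne (congrArg f h))
    (cliqueBlowup_adj.2 ⟨fun h ↦ hne (congrArg f h), Or.inr hadj⟩)

lemma card_le_indepNum_mul_of_colorable [Fintype V] {G : SimpleGraph V} {m : ℕ}
    (h : G.Colorable m) : Fintype.card V ≤ G.indepNum * m := by
  classical
  obtain ⟨C⟩ := h
  calc Fintype.card V = ∑ c : Fin m, #{v | C v = c} :=
        card_eq_sum_card_fiberwise fun _ _ ↦ mem_coe.2 (mem_univ _)
    _ ≤ ∑ _c : Fin m, G.indepNum := sum_le_sum fun c _ ↦ IsIndepSet.card_le_indepNum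
        fun u hu v hv _ hadj ↦ C.valid hadj (by simp_all)
    _ = G.indepNum * m := by simp [mul_comm]

lemma le_wCliqueNum [Fintype W] (q : W → ℕ) {t : Finset W} (ht : H.IsClique (t : Set W)) :
    ∑ w ∈ t, q w ≤ wCliqueNum H q :=
  le_csSup ⟨∑ w, q w, fun _ ⟨s, _, hm⟩ ↦ hm ▸ sum_le_sum_of_subset (subset_univ s)⟩ ⟨t, ht, rfl⟩

lemma wCliqueNum_le (q : W → ℕ) {m : ℕ}
    (h : ∀ t : Finset W, H.IsClique (t : Set W) → ∑ w ∈ t, q w ≤ m) : wCliqueNum H q ≤ m :=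
  csSup_le ⟨0, ∅, by simp⟩ fun _ ⟨t, ht, hm⟩ ↦ hm ▸ h t ht

lemma cliqueNum_cliqueBlowup [Fintype V] [Fintype W] [DecidableEq W] :
    (H.cliqueBlowup f).cliqueNum = wCliqueNum H (fun w ↦ #{v | f v = w}) := by
  apply le_antisymm
  · obtain ⟨s, hs⟩ := (H.cliqueBlowup f).exists_isNClique_cliqueNum
    rw [← hs.card_eq, card_eq_sum_card_image f s]
    refine le_trans (sum_le_sum fun w _ ↦ card_le_card (filter_subset_filter _ (subset_univ s)))
      (le_wCliqueNum _ ?_)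
    simp only [coe_image]
    rintro _ ⟨a, ha, rfl⟩ _ ⟨b, hb, rfl⟩ hne
    exact (cliqueBlowup_adj.1 (hs.isClique ha hb fun h ↦ hne (congrArg f h))).2.resolve_left hne
  · refine wCliqueNum_le _ fun t ht ↦ ?_
    rw [sum_card_fiberwise_eq_card_filter]
    refine IsClique.card_le_cliqueNum (tc := fun a ha b hb hne ↦ ?_)
    simp only [coe_filter, mem_univ, true_and, Set.mem_ofPred_eq] at ha hb
    exact cliqueBlowup_adj.2 ⟨hne, or_iff_not_imp_left.2 fun hab ↦ ht ha hb hab⟩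

lemma cliqueNum_cycleGraph_five_le : (cycleGraph 5).cliqueNum ≤ 2 := by
  have key : ∀ t : Finset (Fin 5), (cycleGraph 5).IsClique (t : Set (Fin 5)) → #t ≤ 2 := by
    decide
  obtain ⟨s, hs⟩ := (cycleGraph 5).exists_isNClique_cliqueNum
  exact hs.card_eq ▸ key s hs.isClique

lemma indepNum_compl_cycleGraph_five_le : (cycleGraph 5)ᶜ.indepNum ≤ 2 :=
  indepNum_compl (G := cycleGraph 5) ▸ cliqueNum_cycleGraph_five_le

lemma isClique_compl_cycleGraph_five_subset :
    ∀ t : Finset (Fin 5), (cycleGraph 5)ᶜ.IsClique (t : Set (Fin 5)) → ∃ j, t ⊆ {j, j + 2} := by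
  decide

lemma pathGraph_five_trueTwinFree : (pathGraph 5).TrueTwinFree := by
  unfold TrueTwinFree
  simp only [pathGraph_adj]
  decide

lemma cycleGraph_four_trueTwinFree : (cycleGraph 4).TrueTwinFree := by
  unfold TrueTwinFree
  decide

lemma indFree_pathGraph_five_compl_cycleGraph_five : IndFree (pathGraph 5) (cycleGraph 5)ᶜ := by
  rw [indFree_iff_not_isIndContained]
  intro h
  have hindep : 3 ≤ (pathGraph 5).indepNum :=
    IsIndepSet.card_le_indepNum (t := ({0, 2, 4} : Finset (Fin 5))) fun a ha b hb _ ↦ by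
      simp only [coe_insert, coe_singleton, Set.mem_insert_iff, Set.mem_singleton_iff] at ha hb
      rcases ha with rfl | rfl | rfl <;> rcases hb with rfl | rfl | rfl <;> simp [pathGraph_adj]
  have := h.indepNum_le.trans indepNum_compl_cycleGraph_five_le
  omega

lemma indFree_cycleGraph_four_compl_cycleGraph_five : IndFree (cycleGraph 4) (cycleGraph 5)ᶜ := by
  rw [indFree_iff_not_isIndContained]
  rintro ⟨e⟩
  have chord : ∀ a b c d : Fin 5, (cycleGraph 5)ᶜ.Adj a b → (cycleGraph 5)ᶜ.Adj b c →
      (cycleGraph 5)ᶜ.Adj c d → (cycleGraph 5)ᶜ.Adj d a → a ≠ c → b ≠ d →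
      (cycleGraph 5)ᶜ.Adj a c ∨ (cycleGraph 5)ᶜ.Adj b d := by
    simp only [compl_adj, cycleGraph_adj]
    decide
  have he (i j : Fin 4) : (cycleGraph 5)ᶜ.Adj (e i) (e j) ↔ (cycleGraph 4).Adj i j :=
    e.map_adj_iff
  rcases chord (e 0) (e 1) (e 2) (e 3) ((he 0 1).2 (by decide)) ((he 1 2).2 (by decide))
    ((he 2 3).2 (by decide)) ((he 3 0).2 (by decide)) (e.injective.ne (by decide))
    (e.injective.ne (by decide)) with h | h
  · exact absurd ((he 0 2).1 h) (by decide)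
  · exact absurd ((he 1 3).1 h) (by decide)

end SimpleGraph

lemma Nat.count_eq_card_filter_fin (p : ℕ → Prop) [DecidablePred p] (n : ℕ) :
    Nat.count p n = #{m : Fin n | p m} := by
  rw [Nat.count_eq_card_filter_range, ← Nat.Iio_eq_range, ← Fin.map_valEmbedding_univ,
    filter_map, card_map]
  rfl

open Fin.NatCast

lemma card_filter_natCast_eq (n : ℕ) {r : ℕ} [NeZero r] (j : Fin r) :
    #{m : Fin n | (m.val : Fin r) = j} = n / r + if j.val < n % r then 1 else 0 := by
  have hmod (m : ℕ) : (m : Fin r) = j ↔ m ≡ j.val [MOD r] := by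
    rw [Fin.ext_iff, Fin.val_natCast, Nat.ModEq, Nat.mod_eq_of_lt j.isLt]
  simp_rw [hmod]
  rw [← Nat.count_eq_card_filter_fin (· ≡ j.val [MOD r]),
    Nat.count_modEq_card n (Nat.pos_of_ne_zero (NeZero.ne r)), Nat.mod_eq_of_lt j.isLt]

/-- Distinct vertices are adjacent unless they differ by `±1` modulo `5`, so that `m ↦ m / 2` is a
proper colouring. -/
def modFiveBlowup (n : ℕ) : SimpleGraph (Fin n) :=
  (cycleGraph 5)ᶜ.cliqueBlowup fun m ↦ (m.val : Fin 5)

lemma cliqueNum_modFiveBlowup (n : ℕ) : (modFiveBlowup n).cliqueNum = (2 * n + 4) / 5 := by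
  rw [modFiveBlowup, cliqueNum_cliqueBlowup]
  simp_rw [card_filter_natCast_eq]
  apply le_antisymm
  · refine wCliqueNum_le _ fun t ht ↦ ?_
    obtain ⟨j, hj⟩ := isClique_compl_cycleGraph_five_subset t ht
    refine (sum_le_sum_of_subset hj).trans ?_
    rw [sum_pair (by simp : j ≠ j + 2), Fin.val_add, Fin.val_two]
    have := j.isLt
    split_ifs <;> omega
  · calc (2 * n + 4) / 5
        = ∑ w ∈ ({0, 2} : Finset (Fin 5)), (n / 5 + if w.val < n % 5 then 1 else 0) := by
          rw [sum_pair (by decide), Fin.val_zero, Fin.val_two]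
          split_ifs <;> omega
      _ ≤ _ := le_wCliqueNum (H := (cycleGraph 5)ᶜ) _ (by decide)

lemma modFiveBlowup_colorable (n : ℕ) : (modFiveBlowup n).Colorable ((n + 1) / 2) := by
  refine ⟨Coloring.mk (fun m ↦ ⟨m / 2, by omega⟩) fun {a b} hab heq ↦ ?_⟩
  have hsucc : a.val + 1 = b.val ∨ b.val + 1 = a.val := by
    have := Fin.val_ne_of_ne (cliqueBlowup_adj.1 hab).1
    simp only [Fin.mk.injEq] at heq
    omega
  have hcycle : (cycleGraph 5).Adj (a.val : Fin 5) (b.val : Fin 5) := by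
    rw [cycleGraph_adj]
    rcases hsucc with h | h <;> rw [← h] <;> push_cast <;> simp
  rcases (cliqueBlowup_adj.1 hab).2 with h | h
  · exact hcycle.ne h
  · exact ((compl_adj _ _ _).1 h).2 hcycle

lemma chromaticNumber_modFiveBlowup (n : ℕ) :
    (modFiveBlowup n).chromaticNumber = ((n + 1) / 2 : ℕ) := by
  refine le_antisymm (modFiveBlowup_colorable n).chromaticNumber_le
    (le_chromaticNumber_iff_colorable.2 fun m hm ↦ ?_)
  have hcard := card_le_indepNum_mul_of_colorable hm
  have hindep : (modFiveBlowup n).indepNum ≤ 2 :=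
    indepNum_cliqueBlowup_le.trans indepNum_compl_cycleGraph_five_le
  have := Nat.mul_le_mul_right m hindep
  rw [Fintype.card_fin] at hcard
  omega

theorem stmt4_general (ω : ℕ) :
    ∃ (n : ℕ) (G : SimpleGraph (Fin n)), IndFree (pathGraph 5) G ∧
      IndFree (cycleGraph 4) G ∧ G.cliqueNum = ω ∧
      G.chromaticNumber = (((5 * ω - 1 + 3) / 4 : ℕ) : ℕ∞) := by
  refine ⟨2 * ((5 * ω - 1 + 3) / 4) - 1, modFiveBlowup _,
    pathGraph_five_trueTwinFree.indFree_cliqueBlowup indFree_pathGraph_five_compl_cycleGraph_five,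
    cycleGraph_four_trueTwinFree.indFree_cliqueBlowup indFree_cycleGraph_four_compl_cycleGraph_five,
    ?_, ?_⟩
  · rw [cliqueNum_modFiveBlowup]
    omega
  · rw [chromaticNumber_modFiveBlowup]
    congr 1
    omega

/-- For every positive integer `ω` there is a finite `(P₅, C₄)`-free graph `G` with
`ω(G) = ω` and `χ(G) = ⌈(5ω − 1)/4⌉`. -/
theorem stmt4 (ω : ℕ) (hω : 0 < ω) :
    ∃ (n : ℕ) (G : SimpleGraph (Fin n)), IndFree (pathGraph 5) G ∧
      IndFree (cycleGraph 4) G ∧ G.cliqueNum = ω ∧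
      G.chromaticNumber = (((5 * ω - 1 + 3) / 4 : ℕ) : ℕ∞) :=
  stmt4_general ω
end

section
/- Every finite critical (P5, co-banner)-free graph is 2K2-free. -/
/-!
Suppose `ab`, `cd` induce a `2K₂` in a critical `(P₅, co-banner)`-free graph `G`, and let `T` be
the set of vertices complete to `{a, b, c, d}`. A shortest `a`–`c` path in `G - T` is an induced
path of `G`, so it has length at most 3, and the two forbidden graphs exclude lengths 2 and 3:
`a` and `c` lie in different components `A`, `C` of `G - T`. Co-banner-freeness makes every vertex
of `A ∪ C` complete to `T`, and it forces two vertices of `T` with different neighbourhoods among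
the remaining vertices to be adjacent. So `T` is a clique of modules separating `C` from the rest,
and `(χ(G) - 1)`-colourings of `G - c` and `G - a` can be glued along `T`, contradicting
criticality.
-/

open SimpleGraph

variable {V : Type*} {G : SimpleGraph V}

theorem IndFree.not_forall_adj_iff {α : Type*} {H : SimpleGraph α} (hfree : IndFree H G)
    (hH : ∀ i j, (∀ k, H.Adj i k ↔ H.Adj j k) → i = j) (f : α → V) :
    ¬ ∀ i j, H.Adj i j ↔ G.Adj (f i) (f j) := by
  intro hf
  have hinj : f.Injective := fun i j hij => hH i j fun k => by rw [hf, hf, hij]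
  exact hfree (Set.range f) ⟨⟨Equiv.ofInjective f hinj, fun {i j} => (hf i j).symm⟩⟩

theorem IndFree.false_of_induced_path {v₀ v₁ v₂ v₃ v₄ : V} (hP5 : IndFree (pathGraph 5) G)
    (h₀₁ : G.Adj v₀ v₁) (h₁₂ : G.Adj v₁ v₂) (h₂₃ : G.Adj v₂ v₃) (h₃₄ : G.Adj v₃ v₄)
    (h₀₂ : ¬ G.Adj v₀ v₂) (h₀₃ : ¬ G.Adj v₀ v₃) (h₀₄ : ¬ G.Adj v₀ v₄)
    (h₁₃ : ¬ G.Adj v₁ v₃) (h₁₄ : ¬ G.Adj v₁ v₄) (h₂₄ : ¬ G.Adj v₂ v₄) : False := by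
  refine hP5.not_forall_adj_iff ?_ ![v₀, v₁, v₂, v₃, v₄] ?_
  · intro i j h
    simp only [Fin.forall_fin_succ, IsEmpty.forall_iff, and_true] at h
    fin_cases i <;> fin_cases j <;> simp_all [pathGraph_adj]
  · intro i j
    fin_cases i <;> fin_cases j <;> simp [pathGraph_adj, G.adj_comm, *]

theorem IndFree.adj_of_coBanner {c d t y z : V} (hcob : IndFree coBanner G)
    (hcd : G.Adj c d) (htc : G.Adj t c) (htd : G.Adj t d) (hty : G.Adj t y) (hyz : G.Adj y z)
    (hyc : ¬ G.Adj y c) (hyd : ¬ G.Adj y d) (hzc : ¬ G.Adj z c) (hzd : ¬ G.Adj z d) :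
    G.Adj t z := by
  by_contra htz
  -- otherwise `z, c, y, d, t` induce a co-banner
  refine hcob.not_forall_adj_iff ?_ ![z, c, y, d, t] ?_
  · intro i j h
    simp only [Fin.forall_fin_succ, IsEmpty.forall_iff, and_true] at h
    fin_cases i <;> fin_cases j <;> simp_all [coBanner, banner, fromEdgeSet_adj]
  · intro i j
    fin_cases i <;> fin_cases j <;> simp [coBanner, banner, fromEdgeSet_adj, *] <;>
      first | exact G.adj_symm ‹_› | exact fun h => ‹¬ G.Adj _ _› (G.adj_symm h)

structure IsInduced2K2 (G : SimpleGraph V) (a b c d : V) : Prop where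
  adj_ab : G.Adj a b
  adj_cd : G.Adj c d
  not_adj_ac : ¬ G.Adj a c
  not_adj_ad : ¬ G.Adj a d
  not_adj_bc : ¬ G.Adj b c
  not_adj_bd : ¬ G.Adj b d

theorem exists_isInduced2K2_of_not_indFree (h : ¬ IndFree twoK2 G) :
    ∃ a b c d, IsInduced2K2 G a b c d := by
  obtain ⟨s, ⟨e⟩⟩ := not_forall_not.mp h
  have hadj : ∀ i j, twoK2.Adj i j ↔ G.Adj (e i) (e j) := fun i j => e.map_rel_iff.symm
  refine ⟨e 0, e 1, e 2, e 3, ⟨?_, ?_, ?_, ?_, ?_, ?_⟩⟩ <;>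
    (rw [← hadj]; simp [twoK2, fromEdgeSet_adj])

section Recoloring

open Finset

def IsProperOn (G : SimpleGraph V) (S : Set V) (f : V → ℕ) : Prop :=
  ∀ ⦃u⦄, u ∈ S → ∀ ⦃v⦄, v ∈ S → G.Adj u v → f u ≠ f v

theorem IsProperOn.mono {S T : Set V} {f : V → ℕ} (hf : IsProperOn G S f) (hTS : T ⊆ S) :
    IsProperOn G T f :=
  fun _ hu _ hv => hf (hTS hu) (hTS hv)

theorem exists_isProperOn_of_colorable_induce {S : Set V} {n : ℕ}
    (h : (G.induce S).Colorable n) : ∃ f : V → ℕ, (∀ v ∈ S, f v < n) ∧ IsProperOn G S f := by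
  classical
  obtain ⟨C, hC⟩ := (colorable_iff_exists_bdd_nat_coloring n).mp h
  refine ⟨fun v => if hv : v ∈ S then C ⟨v, hv⟩ else 0, fun v hv => by simpa [hv] using hC _,
    fun u hu v hv huv => ?_⟩
  simpa [hu, hv] using C.valid (show (G.induce S).Adj ⟨u, hu⟩ ⟨v, hv⟩ from huv)

theorem colorable_of_isProperOn_univ {f : V → ℕ} {n : ℕ} (hlt : ∀ v, f v < n)
    (hf : IsProperOn G Set.univ f) : G.Colorable n :=
  (colorable_iff_exists_bdd_nat_coloring n).mpr
    ⟨Coloring.mk f fun huv => hf (Set.mem_univ _) (Set.mem_univ _) huv, hlt⟩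

theorem Finset.exists_injOn_mapsTo_of_card_le {α β : Type*} [Nonempty β] {s : Finset α}
    {t : Finset β} (h : #s ≤ #t) : ∃ φ : α → β, Set.InjOn φ s ∧ Set.MapsTo φ s t := by
  classical
  obtain ⟨e⟩ := Function.Embedding.nonempty_of_card_le (α := s) (β := t) (by simpa using h)
  refine ⟨fun a => if ha : a ∈ s then e ⟨a, ha⟩ else Classical.arbitrary β, ?_, ?_⟩
  · intro a ha b hb hab
    rw [mem_coe] at ha hb
    simp only [ha, hb, dite_true] at hab
    simpa using e.injective (Subtype.ext hab)
  · intro a ha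
    simp [show a ∈ s from ha]

theorem IsProperOn.exists_image_subset_card_le {X : Finset V} {f₁ f₂ : V → ℕ}
    (h₁ : IsProperOn G X f₁) (h₂ : IsProperOn G X f₂) :
    ∃ g : V → ℕ, IsProperOn G X g ∧ X.image g ⊆ X.image f₁ ∧ #(X.image g) ≤ #(X.image f₂) := by
  by_cases hcard : #(X.image f₂) ≤ #(X.image f₁)
  · obtain ⟨φ, hφinj, hφmaps⟩ := exists_injOn_mapsTo_of_card_le hcard
    refine ⟨φ ∘ f₂, fun u hu v hv huv heq => h₂ hu hv huv ?_, ?_, ?_⟩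
    · exact hφinj (by simpa using mem_image_of_mem f₂ hu) (by simpa using mem_image_of_mem f₂ hv)
        heq
    · rw [← image_image]
      exact fun c hc => by
        obtain ⟨d, hd, rfl⟩ := mem_image.mp hc
        exact hφmaps hd
    · rw [← image_image]
      exact card_image_le
  · exact ⟨f₁, h₁, subset_rfl, by omega⟩

theorem Finset.card_image_le_of_card_image_filter_le {ι : Type*} [DecidableEq ι] {S : Finset V}
    (κ : V → ι) {g f : V → ℕ}
    (hle : ∀ i, #((S.filter (κ · = i)).image g) ≤ #((S.filter (κ · = i)).image f))
    (hf : ∀ u ∈ S, ∀ v ∈ S, κ u ≠ κ v → f u ≠ f v) : #(S.image g) ≤ #(S.image f) := by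
  have hS : ∀ φ : V → ℕ,
      S.image φ = (S.image κ).biUnion fun i => (S.filter (κ · = i)).image φ := by
    intro φ
    ext c
    simp only [mem_image, mem_biUnion, mem_filter]
    constructor
    · rintro ⟨t, ht, rfl⟩
      exact ⟨κ t, ⟨t, ht, rfl⟩, t, ⟨ht, rfl⟩, rfl⟩
    · rintro ⟨i, -, t, ⟨ht, -⟩, rfl⟩
      exact ⟨t, ht, rfl⟩
  have hdisj : ((S.image κ : Finset ι) : Set ι).PairwiseDisjoint
      fun i => (S.filter (κ · = i)).image f := by
    intro i _ j _ hij
    simp only [Function.onFun, Finset.disjoint_left, mem_image, mem_filter]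
    rintro c ⟨u, hu, rfl⟩ ⟨v, hv, huv⟩
    exact hf u hu.1 v hv.1 (by rw [hu.2, hv.2]; exact hij) huv.symm
  calc #(S.image g) ≤ ∑ i ∈ S.image κ, #((S.filter (κ · = i)).image g) := by
        rw [hS g]; exact card_biUnion_le
    _ ≤ ∑ i ∈ S.image κ, #((S.filter (κ · = i)).image f) := sum_le_sum fun i _ => hle i
    _ = #(S.image f) := by rw [hS f, card_biUnion hdisj]

theorem exists_isProperOn_card_image_le_of_modules {ι : Type*} {U : Set V} {S : Finset V}
    {f₁ f₂ : V → ℕ} {n : ℕ} (κ : V → ι) (hSU : ↑S ⊆ U)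
    (hmod : ∀ t ∈ S, ∀ t' ∈ S, κ t = κ t' → ∀ p ∈ U, p ∉ S → G.Adj p t → G.Adj p t')
    (hcomp : ∀ t ∈ S, ∀ t' ∈ S, κ t ≠ κ t' → G.Adj t t')
    (hlt₁ : ∀ v ∈ U, f₁ v < n) (h₁ : IsProperOn G U f₁) (h₂ : IsProperOn G S f₂) :
    ∃ g : V → ℕ, (∀ v ∈ U, g v < n) ∧ IsProperOn G U g ∧ #(S.image g) ≤ #(S.image f₂) := by
  classical
  set X : ι → Finset V := fun i => S.filter (κ · = i)
  have hXS : ∀ i, (X i : Set V) ⊆ S := fun i => coe_subset.mpr (filter_subset _ _)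
  have hmemX : ∀ t ∈ S, t ∈ X (κ t) := fun t ht => by simp [X, ht]
  -- each class gets colours that `f₁` uses on it, but no more of them than `f₂` uses
  choose h hproper hsub hcard using fun i =>
    (h₁.mono ((hXS i).trans hSU)).exists_image_subset_card_le (h₂.mono (hXS i))
  set g : V → ℕ := fun v => if v ∈ S then h (κ v) v else f₁ v
  have hgS : ∀ t ∈ S, ∃ u ∈ S, κ u = κ t ∧ g t = f₁ u := by
    intro t ht
    obtain ⟨u, hu, hut⟩ := mem_image.mp (hsub (κ t) (mem_image_of_mem _ (hmemX t ht)))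
    simp only [X, mem_filter] at hu
    exact ⟨u, hu.1, hu.2, by simp [g, ht, hut]⟩
  have hgU : ∀ v ∈ U, v ∉ S → g v = f₁ v := fun v _ hv => by simp [g, hv]
  have hkey : ∀ u ∈ U, ∀ v ∈ S, G.Adj u v → g u ≠ g v := by
    intro u hu v hv huv
    obtain ⟨v', hv', hκv, hgv⟩ := hgS v hv
    by_cases huS : u ∈ S
    · by_cases hκ : κ u = κ v
      · have := hproper (κ v) (by simpa [hκ] using hmemX u huS) (hmemX v hv) huv
        simpa [g, huS, hv, hκ] using this
      · obtain ⟨u', hu', hκu, hgu⟩ := hgS u huS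
        rw [hgu, hgv]
        exact h₁ (hSU hu') (hSU hv') (hcomp u' hu' v' hv' (by rwa [hκu, hκv]))
    · rw [hgU u hu huS, hgv]
      exact h₁ hu (hSU hv') (hmod v hv v' hv' hκv.symm u hu huS huv)
  refine ⟨g, fun v hv => ?_, fun u hu v hv huv => ?_, ?_⟩
  · by_cases hvS : v ∈ S
    · obtain ⟨u, hu, -, hgv⟩ := hgS v hvS
      exact hgv ▸ hlt₁ u (hSU hu)
    · exact hgU v hv hvS ▸ hlt₁ v hv
  · by_cases hvS : v ∈ S
    · exact hkey u hu v hvS huv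
    by_cases huS : u ∈ S
    · exact (hkey v hv u huS huv.symm).symm
    rw [hgU u hu huS, hgU v hv hvS]
    exact h₁ hu hv huv
  · refine card_image_le_of_card_image_filter_le κ (fun i => le_trans ?_ (hcard i))
      (fun u hu v hv huv => h₂ hu hv (hcomp u hu v hv huv))
    refine card_le_card fun c hc => ?_
    obtain ⟨t, ht, rfl⟩ := mem_image.mp hc
    obtain ⟨htS, rfl⟩ := mem_filter.mp ht
    exact mem_image.mpr ⟨t, ht, by simp [g, htS]⟩

theorem colorable_of_isProperOn_of_card_image_le {Q : Set V} {S : Finset V} {g f : V → ℕ}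
    {n : ℕ} (hQS : ∀ q ∈ Q, ∀ s ∈ S, G.Adj q s) (hPQ : ∀ p ∉ Q, p ∉ S → ∀ q ∈ Q, ¬ G.Adj p q)
    (hglt : ∀ v ∉ Q, g v < n) (hg : IsProperOn G Qᶜ g)
    (hflt : ∀ v ∈ Q ∪ S, f v < n) (hf : IsProperOn G (Q ∪ S) f)
    (hcard : #(S.image g) ≤ #(S.image f)) : G.Colorable n := by
  classical
  have hgS : S.image g ⊆ range n := fun c hc => by
    obtain ⟨s, hs, rfl⟩ := mem_image.mp hc
    exact mem_range.mpr (hglt s fun hsQ => G.loopless.irrefl s (hQS s hsQ s hs))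
  have hfS : S.image f ⊆ range n := fun c hc => by
    obtain ⟨s, hs, rfl⟩ := mem_image.mp hc
    exact mem_range.mpr (hflt s (Or.inr hs))
  -- `Q` keeps its `f`-colouring, relabelled injectively into the colours `g` leaves free on `S`
  obtain ⟨σ, hσinj, hσmaps⟩ := exists_injOn_mapsTo_of_card_le
    (s := range n \ S.image f) (t := range n \ S.image g)
    (by rw [card_sdiff_of_subset hfS, card_sdiff_of_subset hgS]; omega)
  have hfQ : ∀ q ∈ Q, f q ∈ range n \ S.image f := by
    intro q hq
    refine mem_sdiff.mpr ⟨mem_range.mpr (hflt q (Or.inl hq)), fun hmem => ?_⟩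
    obtain ⟨s, hs, hsq⟩ := mem_image.mp hmem
    exact hf (Or.inl hq) (Or.inr hs) (hQS q hq s hs) hsq.symm
  set F : V → ℕ := fun v => if v ∈ Q then σ (f v) else g v
  have hmixed : ∀ q ∈ Q, ∀ v ∉ Q, G.Adj q v → F q ≠ F v := by
    intro q hq v hv hqv
    have hvS : v ∈ S := by_contra fun hvS => hPQ v hv hvS q hq hqv.symm
    have := (mem_sdiff.mp (hσmaps (hfQ q hq))).2
    simp only [F, hq, hv, if_true, if_false]
    exact fun h => this (h ▸ mem_image_of_mem g hvS)
  refine colorable_of_isProperOn_univ (f := F) (fun v => ?_) fun u _ v _ huv => ?_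
  · by_cases hv : v ∈ Q
    · simpa [F, hv] using (mem_sdiff.mp (hσmaps (hfQ v hv))).1
    · simpa [F, hv] using hglt v hv
  by_cases hu : u ∈ Q <;> by_cases hv : v ∈ Q
  · simp only [F, hu, hv, if_true]
    exact fun h => hf (Or.inl hu) (Or.inl hv) huv (hσinj (hfQ u hu) (hfQ v hv) h)
  · exact hmixed u hu v hv huv
  · exact (hmixed v hv u hu huv.symm).symm
  · simp only [F, hu, hv, if_false]
    exact hg hu hv huv

theorem colorable_of_cliqueOfModules_cutset {ι : Type*} {Q : Set V} {S : Finset V} {n : ℕ}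
    (κ : V → ι) (hQS : ∀ q ∈ Q, ∀ s ∈ S, G.Adj q s)
    (hPQ : ∀ p ∉ Q, p ∉ S → ∀ q ∈ Q, ¬ G.Adj p q)
    (hmod : ∀ t ∈ S, ∀ t' ∈ S, κ t = κ t' → ∀ p ∉ Q, p ∉ S → G.Adj p t → G.Adj p t')
    (hcomp : ∀ t ∈ S, ∀ t' ∈ S, κ t ≠ κ t' → G.Adj t t')
    (h₁ : (G.induce Qᶜ).Colorable n) (h₂ : (G.induce (Q ∪ S)).Colorable n) : G.Colorable n := by
  obtain ⟨f₁, hlt₁, hf₁⟩ := exists_isProperOn_of_colorable_induce h₁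
  obtain ⟨f₂, hlt₂, hf₂⟩ := exists_isProperOn_of_colorable_induce h₂
  have hSQ : (S : Set V) ⊆ Qᶜ := fun s hs hsQ => G.loopless.irrefl s (hQS s hsQ s hs)
  obtain ⟨g, hglt, hg, hcard⟩ := exists_isProperOn_card_image_le_of_modules κ hSQ hmod hcomp
    hlt₁ hf₁ (hf₂.mono Set.subset_union_right)
  exact colorable_of_isProperOn_of_card_image_le hQS hPQ hglt hg hlt₂ hf₂ hcard

end Recoloring

theorem IsCritical.not_neighborSet_subset (hcrit : IsCritical G) {u v : V} (hne : u ≠ v) :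
    ¬ G.neighborSet u ⊆ G.neighborSet v := by
  classical
  intro hsub
  have hv : G.Adj u ≤ G.Adj v := hsub
  let φ : G →g G.induce {w | w ≠ u} :=
    { toFun := fun w => if h : w = u then ⟨v, hne.symm⟩ else ⟨w, h⟩
      map_rel' := by
        intro x y hxy
        by_cases hx : x = u <;> by_cases hy : y = u
        · subst hx hy; exact absurd hxy (G.loopless.irrefl _)
        · subst hx; simpa [hy] using hv y hxy
        · subst hy; simpa [hx] using (hv x hxy.symm).symm
        · simpa [hx, hy] using hxy }
  exact (hcrit.2 u).not_ge (chromaticNumber_mono_of_hom φ)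

theorem IsCritical.exists_colorable [Finite V] (hcrit : IsCritical G) :
    ∃ n : ℕ, ¬ G.Colorable n ∧ ∀ v, (G.induce {u | u ≠ v}).Colorable n := by
  obtain ⟨k, hk⟩ := ENat.ne_top_iff_exists.mp
    (chromaticNumber_ne_top_iff_exists.mpr ⟨_, G.colorable_chromaticNumber_of_fintype⟩)
  have hk0 : k ≠ 0 := by
    rintro rfl
    exact hcrit.1.elim (chromaticNumber_eq_zero_iff.mp (by exact_mod_cast hk.symm)).false
  refine ⟨k - 1, fun h => ?_, fun v => ?_⟩
  · have := h.chromaticNumber_le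
    rw [← hk, Nat.cast_le] at this
    omega
  · rw [← chromaticNumber_le_iff_colorable]
    refine Order.le_of_lt_add_one ?_
    rw [show ((k - 1 : ℕ) : ℕ∞) + 1 = k by norm_cast; omega, hk]
    exact hcrit.2 v

theorem IsCritical.false_of_cliqueOfModules_cutset [Finite V] (hcrit : IsCritical G) {ι : Type*}
    {Q : Set V} {S : Finset V} (κ : V → ι) (hQS : ∀ q ∈ Q, ∀ s ∈ S, G.Adj q s)
    (hPQ : ∀ p ∉ Q, p ∉ S → ∀ q ∈ Q, ¬ G.Adj p q)
    (hmod : ∀ t ∈ S, ∀ t' ∈ S, κ t = κ t' → ∀ p ∉ Q, p ∉ S → G.Adj p t → G.Adj p t')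
    (hcomp : ∀ t ∈ S, ∀ t' ∈ S, κ t ≠ κ t' → G.Adj t t') {p q : V} (hpQ : p ∉ Q) (hpS : p ∉ S)
    (hq : q ∈ Q) : False := by
  obtain ⟨n, hn, hcol⟩ := hcrit.exists_colorable
  refine hn (colorable_of_cliqueOfModules_cutset κ hQS hPQ hmod hcomp ?_ ?_)
  · exact (hcol q).of_hom
      (G.induceHomOfLE fun v (hv : v ∉ Q) (hvq : v = q) => hv (hvq ▸ hq)).toHom
  · refine (hcol p).of_hom (G.induceHomOfLE (s' := {u | u ≠ p}) fun v hv hvp => ?_).toHom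
    exact hv.elim (fun hvQ => hpQ (hvp ▸ hvQ)) fun hvS => hpS (hvp ▸ hvS)

/-- `G - T`, kept on the vertex type `V`: the vertices of `T` become isolated, so reachability from
a vertex outside `T` is reachability in `G - T`. -/
def SimpleGraph.isolate (G : SimpleGraph V) (T : Set V) : SimpleGraph V where
  Adj x y := G.Adj x y ∧ x ∉ T ∧ y ∉ T
  symm := ⟨fun _ _ h => ⟨h.1.symm, h.2.2, h.2.1⟩⟩
  loopless := ⟨fun x h => G.loopless.irrefl x h.1⟩

theorem SimpleGraph.Reachable.notMem_of_isolate {T : Set V} {u v : V}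
    (h : (G.isolate T).Reachable u v) (hu : u ∉ T) : v ∉ T := by
  induction (reachable_iff_reflTransGen u v).mp h with
  | refl => exact hu
  | tail _ hyz _ => exact hyz.2.2

theorem SimpleGraph.Walk.not_adj_getVert_of_length_eq_dist {u v : V} (p : G.Walk u v)
    (hp : p.length = G.dist u v) {i j : ℕ} (hij : i + 2 ≤ j) (hj : j ≤ p.length) :
    ¬ G.Adj (p.getVert i) (p.getVert j) := fun hadj => by
  have := G.dist_le ((p.take i).append (.cons hadj (p.drop j)))
  simp only [Walk.length_append, Walk.take_length, Walk.length_cons, Walk.drop_length] at this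
  omega

theorem SimpleGraph.Walk.not_adj_getVert_of_isolate {T : Set V} {u v : V} (hu : u ∉ T)
    (p : (G.isolate T).Walk u v) (hp : p.length = (G.isolate T).dist u v) {i j : ℕ}
    (hij : i + 2 ≤ j) (hj : j ≤ p.length) : ¬ G.Adj (p.getVert i) (p.getVert j) := fun hadj =>
  p.not_adj_getVert_of_length_eq_dist hp hij hj
    ⟨hadj, Reachable.notMem_of_isolate ⟨p.take i⟩ hu, Reachable.notMem_of_isolate ⟨p.take j⟩ hu⟩

theorem IndFree.length_le_three_of_isolate (hP5 : IndFree (pathGraph 5) G) {T : Set V}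
    {u v : V} (hu : u ∉ T) (p : (G.isolate T).Walk u v)
    (hp : p.length = (G.isolate T).dist u v) : p.length ≤ 3 := by
  by_contra! h
  have hadj : ∀ i < 4, G.Adj (p.getVert i) (p.getVert (i + 1)) :=
    fun i hi => (p.adj_getVert_succ (by omega)).1
  have hnadj : ∀ i j, i + 2 ≤ j → j ≤ 4 → ¬ G.Adj (p.getVert i) (p.getVert j) :=
    fun i j hij hj => p.not_adj_getVert_of_isolate hu hp hij (by omega)
  exact hP5.false_of_induced_path (hadj 0 (by norm_num)) (hadj 1 (by norm_num))
    (hadj 2 (by norm_num)) (hadj 3 (by norm_num)) (hnadj 0 2 le_rfl (by norm_num))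
    (hnadj 0 3 (by norm_num) (by norm_num)) (hnadj 0 4 (by norm_num) le_rfl)
    (hnadj 1 3 le_rfl (by norm_num)) (hnadj 1 4 (by norm_num) le_rfl) (hnadj 2 4 le_rfl le_rfl)

def SimpleGraph.completeTo (G : SimpleGraph V) (s : Set V) : Set V :=
  {t | ∀ x ∈ s, G.Adj t x}

theorem SimpleGraph.notMem_completeTo {s : Set V} {x : V} (hx : x ∈ s) : x ∉ G.completeTo s :=
  fun h => G.loopless.irrefl x (h x hx)


theorem not_adj_of_not_reachable_isolate {T : Set V} {u v y : V} (huv : G.Adj u v) (hu : u ∉ T)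
    (hv : v ∉ T) (hy : y ∉ T) (hyu : ¬ (G.isolate T).Reachable u y) :
    ¬ G.Adj y u ∧ ¬ G.Adj y v :=
  ⟨fun hyu' => hyu (show (G.isolate T).Adj u y from ⟨hyu'.symm, hu, hy⟩).reachable,
    fun hyv => hyu ((show (G.isolate T).Adj u v from ⟨huv, hu, hv⟩).reachable.trans
      (show (G.isolate T).Adj v y from ⟨hyv.symm, hv, hy⟩).reachable)⟩

theorem IndFree.adj_of_reachable_isolate (hcob : IndFree coBanner G) {s : Set V} {a c d x t : V}
    (ha : a ∈ s) (hc : c ∈ s) (hd : d ∈ s) (hcd : G.Adj c d)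
    (hac : ¬ (G.isolate (G.completeTo s)).Reachable a c)
    (hx : (G.isolate (G.completeTo s)).Reachable a x) (ht : t ∈ G.completeTo s) : G.Adj t x := by
  have hfar : ∀ {y}, (G.isolate (G.completeTo s)).Reachable a y → ¬ G.Adj y c ∧ ¬ G.Adj y d :=
    fun hy => not_adj_of_not_reachable_isolate hcd (notMem_completeTo hc) (notMem_completeTo hd)
      (hy.notMem_of_isolate (notMem_completeTo ha)) fun hcy => hac (hy.trans hcy.symm)
  induction (reachable_iff_reflTransGen a x).mp hx with
  | refl => exact ht a ha
  | tail hy hyz ih =>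
    have hy' := (reachable_iff_reflTransGen _ _).mpr hy
    exact hcob.adj_of_coBanner hcd (ht c hc) (ht d hd) (ih hy') hyz.1 (hfar hy').1 (hfar hy').2
      (hfar (hy'.trans hyz.reachable)).1 (hfar (hy'.trans hyz.reachable)).2

theorem IsCritical.exists_adj_notMem_not_reachable (hcrit : IsCritical G) {s : Set V} {a f : V}
    (ha : a ∈ s) (hf : f ∉ G.completeTo s)
    (hfa : ¬ (G.isolate (G.completeTo s)).Reachable a f) :
    ∃ g, G.Adj f g ∧ g ∉ G.completeTo s ∧ ¬ (G.isolate (G.completeTo s)).Reachable a g := by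
  by_contra! hng
  refine hcrit.not_neighborSet_subset (u := f) (v := a) ?_ fun x (hx : G.Adj f x) => ?_
  · rintro rfl
    exact hfa .rfl
  · by_cases hxT : x ∈ G.completeTo s
    · exact (hxT a ha).symm
    · exact (hfa ((hng x hx hxT).trans
        (show (G.isolate _).Adj x f from ⟨hx.symm, hxT, hf⟩).reachable)).elim

theorem IsCritical.adj_of_adj_of_not_adj (hcrit : IsCritical G) (hcob : IndFree coBanner G)
    {s : Set V} {a b t t' f : V} (ha : a ∈ s) (hb : b ∈ s) (hab : G.Adj a b)
    (ht : t ∈ G.completeTo s) (ht' : t' ∈ G.completeTo s) (hf : f ∉ G.completeTo s)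
    (hfa : ¬ (G.isolate (G.completeTo s)).Reachable a f) (htf : G.Adj t f)
    (ht'f : ¬ G.Adj t' f) : G.Adj t t' := by
  obtain ⟨g, hfg, hg, hga⟩ := hcrit.exists_adj_notMem_not_reachable ha hf hfa
  have hfab := not_adj_of_not_reachable_isolate hab (notMem_completeTo ha)
    (notMem_completeTo hb) hf hfa
  have hgab := not_adj_of_not_reachable_isolate hab (notMem_completeTo ha)
    (notMem_completeTo hb) hg hga
  have htg : G.Adj t g :=
    hcob.adj_of_coBanner hab (ht a ha) (ht b hb) htf hfg hfab.1 hfab.2 hgab.1 hgab.2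
  have ht'g : ¬ G.Adj t' g := fun ht'g => ht'f (hcob.adj_of_coBanner hab (ht' a ha) (ht' b hb)
    ht'g hfg.symm hgab.1 hgab.2 hfab.1 hfab.2)
  exact hcob.adj_of_coBanner hfg htf htg (ht a ha) (ht' a ha).symm (fun h => hfab.1 h.symm)
    (fun h => hgab.1 h.symm) ht'f ht'g

namespace IsInduced2K2

variable {a b c d : V}

theorem swap_right (h : IsInduced2K2 G a b c d) : IsInduced2K2 G a b d c :=
  ⟨h.adj_ab, h.adj_cd.symm, h.not_adj_ad, h.not_adj_ac, h.not_adj_bd, h.not_adj_bc⟩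

theorem adj_and_adj_of_adj_of_adj (hP5 : IndFree (pathGraph 5) G) (hcob : IndFree coBanner G)
    (h : IsInduced2K2 G a b c d) {v : V} (hva : G.Adj v a) (hvc : G.Adj v c) :
    G.Adj v b ∧ G.Adj v d := by
  have hbd : G.Adj v b → G.Adj v d := fun hvb =>
    hcob.adj_of_coBanner h.adj_ab hva hvb hvc h.adj_cd (fun h' => h.not_adj_ac h'.symm)
      (fun h' => h.not_adj_bc h'.symm) (fun h' => h.not_adj_ad h'.symm)
      (fun h' => h.not_adj_bd h'.symm)
  have hdb : G.Adj v d → G.Adj v b := fun hvd =>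
    hcob.adj_of_coBanner h.adj_cd hvc hvd hva h.adj_ab h.not_adj_ac h.not_adj_ad h.not_adj_bc
      h.not_adj_bd
  by_cases hvb : G.Adj v b
  · exact ⟨hvb, hbd hvb⟩
  · exact (hP5.false_of_induced_path h.adj_ab.symm hva.symm hvc h.adj_cd
      (fun h' => hvb h'.symm) h.not_adj_bc h.not_adj_bd h.not_adj_ac h.not_adj_ad
      (fun hvd => hvb (hdb hvd))).elim

theorem not_reachable (hP5 : IndFree (pathGraph 5) G) (hcob : IndFree coBanner G)
    (h : IsInduced2K2 G a b c d) :
    ¬ (G.isolate (G.completeTo {a, b, c, d})).Reachable a c := by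
  set T := G.completeTo {a, b, c, d}
  intro hr
  obtain ⟨p, hp⟩ := hr.exists_walk_length_eq_dist
  have haT : a ∉ T := notMem_completeTo (by simp)
  have hadj : ∀ i < p.length, G.Adj (p.getVert i) (p.getVert (i + 1)) :=
    fun i hi => (p.adj_getVert_succ hi).1
  have hnadj : ∀ {i j}, i + 2 ≤ j → j ≤ p.length → ¬ G.Adj (p.getVert i) (p.getVert j) :=
    p.not_adj_getVert_of_isolate haT hp
  have hfirst : p.getVert 0 = a := p.getVert_zero
  have hlast : p.getVert p.length = c := p.getVert_length
  obtain hL | hL | hL | hL : p.length = 0 ∨ p.length = 1 ∨ p.length = 2 ∨ p.length = 3 := by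
    have := hP5.length_le_three_of_isolate haT p hp
    omega
  all_goals rw [hL] at hlast
  · rw [hfirst] at hlast
    exact h.not_adj_ad (hlast ▸ h.adj_cd)
  · have h01 : G.Adj (p.getVert 0) (p.getVert 1) := hadj 0 (by omega)
    rw [hfirst, hlast] at h01
    exact h.not_adj_ac h01
  · have hza : G.Adj (p.getVert 1) (p.getVert 0) := (hadj 0 (by omega)).symm
    have hzc : G.Adj (p.getVert 1) (p.getVert 2) := hadj 1 (by omega)
    rw [hfirst] at hza
    rw [hlast] at hzc
    obtain ⟨hzb, hzd⟩ := h.adj_and_adj_of_adj_of_adj hP5 hcob hza hzc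
    refine Reachable.notMem_of_isolate ⟨p.take 1⟩ haT ?_
    simpa [T, completeTo] using ⟨hza, hzb, hzc, hzd⟩
  · have hz₁a : G.Adj (p.getVert 1) (p.getVert 0) := (hadj 0 (by omega)).symm
    have hz₁₂ : G.Adj (p.getVert 1) (p.getVert 2) := hadj 1 (by omega)
    have hz₂c : G.Adj (p.getVert 2) (p.getVert 3) := hadj 2 (by omega)
    have hz₁c : ¬ G.Adj (p.getVert 1) (p.getVert 3) := hnadj le_rfl hL.ge
    have hz₂a : ¬ G.Adj (p.getVert 0) (p.getVert 2) := hnadj le_rfl (by omega)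
    rw [hfirst] at hz₁a hz₂a
    rw [hlast] at hz₂c hz₁c
    have hz₁d : ¬ G.Adj (p.getVert 1) d := fun hz₁d =>
      hz₁c (h.swap_right.adj_and_adj_of_adj_of_adj hP5 hcob hz₁a hz₁d).2
    by_cases hz₂d : G.Adj (p.getVert 2) d
    · exact hz₂a (hcob.adj_of_coBanner h.adj_cd hz₂c hz₂d hz₁₂.symm hz₁a
        hz₁c hz₁d h.not_adj_ac h.not_adj_ad).symm
    · exact hP5.false_of_induced_path hz₁a.symm hz₁₂ hz₂c h.adj_cd
        hz₂a h.not_adj_ac h.not_adj_ad hz₁c hz₁d hz₂d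

theorem not_isCritical [Finite V] (hP5 : IndFree (pathGraph 5) G)
    (hcob : IndFree coBanner G) (h : IsInduced2K2 G a b c d) : ¬ IsCritical G := by
  intro hcrit
  set s : Set V := {a, b, c, d}
  set T := G.completeTo s
  set H := G.isolate T
  have ha : a ∈ s := by simp [s]
  have hb : b ∈ s := by simp [s]
  have hc : c ∈ s := by simp [s]
  have hd : d ∈ s := by simp [s]
  have hac : ¬ H.Reachable a c := h.not_reachable hP5 hcob
  have hmemT : ∀ {x}, x ∈ (Set.toFinite T).toFinset ↔ x ∈ T := Set.Finite.mem_toFinset _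
  let κ : V → Set V := fun t => {f | f ∉ T ∧ ¬ H.Reachable a f ∧ G.Adj t f}
  refine hcrit.false_of_cliqueOfModules_cutset (Q := {x | H.Reachable c x})
    (S := (Set.toFinite T).toFinset) κ ?_ ?_ ?_ ?_ (fun h' => hac h'.symm)
    (hmemT.not.mpr (notMem_completeTo ha)) (Reachable.refl c)
  · intro q hq t ht
    exact (hcob.adj_of_reachable_isolate hc ha hb h.adj_ab (fun h' => hac h'.symm) hq
      (hmemT.mp ht)).symm
  · intro p hpQ hpT q (hq : H.Reachable c q) hpq
    exact hpQ (hq.trans (show H.Adj q p from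
      ⟨hpq.symm, hq.notMem_of_isolate (notMem_completeTo hc), hmemT.not.mp hpT⟩).reachable)
  · intro t _ t' ht' hκ p _ hpT hpt
    by_cases hpa : H.Reachable a p
    · exact (hcob.adj_of_reachable_isolate ha hc hd h.adj_cd hac hpa (hmemT.mp ht')).symm
    · have hpκ : p ∈ κ t' := hκ ▸ ⟨hmemT.not.mp hpT, hpa, hpt.symm⟩
      exact hpκ.2.2.symm
  · intro t ht t' ht' hκ
    by_contra htt'
    refine hκ (Set.ext fun f => ⟨fun ⟨hf, hfa, htf⟩ => ⟨hf, hfa, ?_⟩,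
      fun ⟨hf, hfa, ht'f⟩ => ⟨hf, hfa, ?_⟩⟩)
    · by_contra ht'f
      exact htt' (hcrit.adj_of_adj_of_not_adj hcob ha hb h.adj_ab (hmemT.mp ht) (hmemT.mp ht')
        hf hfa htf ht'f)
    · by_contra htf
      exact htt' (hcrit.adj_of_adj_of_not_adj hcob ha hb h.adj_ab (hmemT.mp ht') (hmemT.mp ht)
        hf hfa ht'f htf).symm

end IsInduced2K2

/-- Every finite critical `(P₅, co-banner)`-free graph is `2K₂`-free. -/
theorem stmt6 {V : Type} [Fintype V] (G : SimpleGraph V) (hcrit : IsCritical G)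
    (hP5 : IndFree (pathGraph 5) G) (hcob : IndFree coBanner G) :
    IndFree twoK2 G := by
  by_contra h2K2
  obtain ⟨a, b, c, d, h⟩ := exists_isInduced2K2_of_not_indFree h2K2
  exact h.not_isCritical hP5 hcob hcrit
end

section
/- Let G be a finite graph and let G1, G2 be induced subgraphs of G with V(G1) ∪ V(G2) = V(G), V(G1)∖V(G2) ≠ ∅, V(G2)∖V(G1) ≠ ∅, and no edge of G joining V(G1)∖V(G2) to V(G2)∖V(G1). Suppose X = V(G1) ∩ V(G2) can be written as the union of pairwise disjoint modules X1, …, Xk of G such that for all distinct i, j every vertex of Xi is adjacent to every vertex of Xj. Then for every vertex-weight function q: V(G) → ℕ, χ_q(G) = max{χ_q(G1), χ_q(G2)} and ω_q(G) = max{ω_q(G1), ω_q(G2)}. -/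
open SimpleGraph

/-!
A clique of `G` cannot meet both `A \ B` and `B \ A`, so it lives in `G[A]` or in `G[B]`.

For colourings, fix optimal `q`-colourings of `G[A]` and `G[B]` on a common palette of
`max (χ_q G[A]) (χ_q G[B])` colours. A vertex outside a module `Xᵢ` that sees `Xᵢ` sees all of it,
so it avoids every colour used on `Xᵢ`; hence `Xᵢ` may be recoloured by any colouring that only
uses those colours. There are at least `χ_q G[Xᵢ]` of them, and they are disjoint for distinct `i`
because the modules are pairwise complete. Recolour both sides from one colouring of the `Xᵢ` with
disjoint blocks of colours; a permutation of the palette then makes the two colourings agree on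
`A ∩ B`, and they glue to a colouring of `G`.
-/

open Finset
open scoped Function

section Colouring

variable {V W α β : Type*} {G : SimpleGraph V} {q : V → ℕ} {L : V → Finset α}

def IsWColouring (G : SimpleGraph V) (q : V → ℕ) (L : V → Finset α) : Prop :=
  (∀ v, #(L v) = q v) ∧ ∀ ⦃u v⦄, G.Adj u v → Disjoint (L u) (L v)

theorem IsWColouring.map (hL : IsWColouring G q L) (e : α ↪ β) :
    IsWColouring G q fun v => (L v).map e :=
  ⟨fun v => (card_map e).trans (hL.1 v), fun _ _ h => (disjoint_map e).2 (hL.2 h)⟩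

theorem IsWColouring.comap {H : SimpleGraph W} (hL : IsWColouring G q L) (f : H →g G) :
    IsWColouring H (q ∘ f) (L ∘ f) :=
  ⟨fun v => hL.1 (f v), fun _ _ h => hL.2 (f.map_adj h)⟩

theorem wChromaticNumber_le {K : ℕ} {L : V → Finset (Fin K)} (hL : IsWColouring G q L) :
    wChromaticNumber G q ≤ K :=
  Nat.sInf_le ⟨L, hL⟩

theorem IsWColouring.wChromaticNumber_le_natCard [Finite α] (hL : IsWColouring G q L) :
    wChromaticNumber G q ≤ Nat.card α :=
  wChromaticNumber_le (hL.map (Finite.equivFin α).toEmbedding)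

theorem isWColouring_sigmaMk (G : SimpleGraph V) (q : V → ℕ) :
    IsWColouring G q fun v => (univ : Finset (Fin (q v))).map (Function.Embedding.sigmaMk v) := by
  refine ⟨fun v => by simp, fun u v h => disjoint_left.2 ?_⟩
  simp only [mem_map, mem_univ, true_and, Function.Embedding.sigmaMk_apply]
  rintro _ ⟨i, rfl⟩ ⟨j, hji⟩
  exact G.ne_of_adj h (congrArg Sigma.fst hji).symm

theorem exists_isWColouring_of_le [Finite V] {K : ℕ} (h : wChromaticNumber G q ≤ K) :
    ∃ L : V → Finset (Fin K), IsWColouring G q L := by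
  obtain ⟨L, hL⟩ : ∃ L : V → Finset (Fin (wChromaticNumber G q)), IsWColouring G q L :=
    Nat.sInf_mem (s := {k | ∃ L : V → Finset (Fin k), IsWColouring G q L})
      ⟨_, _, (isWColouring_sigmaMk G q).map (Finite.equivFin _).toEmbedding⟩
  exact ⟨_, hL.map (Fin.castLEEmb h)⟩

def IsWColouringOn (G : SimpleGraph V) (q : V → ℕ) (S : Set V) (L : V → Finset α) : Prop :=
  IsWColouring (G.induce S) (fun v => q v) (fun v => L v)

theorem isWColouringOn_iff {S : Set V} :
    IsWColouringOn G q S L ↔ (∀ v ∈ S, #(L v) = q v) ∧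
      ∀ u ∈ S, ∀ v ∈ S, G.Adj u v → Disjoint (L u) (L v) := by
  simp [IsWColouringOn, IsWColouring]

theorem IsWColouringOn.map {S : Set V} (hL : IsWColouringOn G q S L) (e : α ↪ β) :
    IsWColouringOn G q S fun v => (L v).map e :=
  IsWColouring.map hL e

theorem IsWColouringOn.mono {S T : Set V} (hL : IsWColouringOn G q S L) (hTS : T ⊆ S) :
    IsWColouringOn G q T L := by
  rw [isWColouringOn_iff] at hL ⊢
  exact ⟨fun v hv => hL.1 v (hTS hv), fun u hu v hv => hL.2 u (hTS hu) v (hTS hv)⟩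

theorem IsWColouring.isWColouringOn (hL : IsWColouring G q L) (S : Set V) :
    IsWColouringOn G q S L :=
  hL.comap (SimpleGraph.Embedding.induce S).toHom

theorem wChromaticNumber_induce_le [Finite V] (S : Set V) :
    wChromaticNumber (G.induce S) (fun v => q v) ≤ wChromaticNumber G q := by
  obtain ⟨L, hL⟩ := exists_isWColouring_of_le (G := G) (q := q) le_rfl
  exact wChromaticNumber_le (hL.isWColouringOn S)

theorem exists_isWColouringOn_of_le [Finite V] {S : Set V} {K : ℕ}
    (h : wChromaticNumber (G.induce S) (fun v => q v) ≤ K) :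
    ∃ L : V → Finset (Fin K), IsWColouringOn G q S L := by
  obtain ⟨L, hL⟩ := exists_isWColouring_of_le h
  refine ⟨Function.extend Subtype.val L fun _ => ∅, ?_⟩
  have hext : (fun v : S => Function.extend Subtype.val L (fun _ => ∅) v) = L :=
    funext fun v => Subtype.val_injective.extend_apply _ _ v
  rwa [IsWColouringOn, hext]

theorem SimpleGraph.Adj.both_mem_or_both_mem {A B : Set V} (hUnion : A ∪ B = Set.univ)
    (hNoEdge : ∀ a ∈ A \ B, ∀ b ∈ B \ A, ¬G.Adj a b) {u v : V} (h : G.Adj u v) :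
    (u ∈ A ∧ v ∈ A) ∨ (u ∈ B ∧ v ∈ B) := by
  have hu : u ∈ A ∪ B := hUnion ▸ trivial
  have hv : v ∈ A ∪ B := hUnion ▸ trivial
  have := h.symm
  grind

theorem isWColouring_piecewise {A B : Set V} [DecidablePred (· ∈ A)] {L₁ L₂ : V → Finset α}
    (hUnion : A ∪ B = Set.univ) (hNoEdge : ∀ a ∈ A \ B, ∀ b ∈ B \ A, ¬G.Adj a b)
    (h₁ : IsWColouringOn G q A L₁) (h₂ : IsWColouringOn G q B L₂)
    (hagree : ∀ v ∈ A ∩ B, L₁ v = L₂ v) : IsWColouring G q (A.piecewise L₁ L₂) := by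
  rw [isWColouringOn_iff] at h₁ h₂
  have eq₁ : ∀ v ∈ A, A.piecewise L₁ L₂ v = L₁ v := fun v hv => A.piecewise_eq_of_mem _ _ hv
  have eq₂ : ∀ v ∈ B, A.piecewise L₁ L₂ v = L₂ v := fun v hv => by
    by_cases hvA : v ∈ A
    · rw [eq₁ v hvA, hagree v ⟨hvA, hv⟩]
    · exact A.piecewise_eq_of_notMem _ _ hvA
  refine ⟨fun v => ?_, fun u v h => ?_⟩
  · rcases (hUnion ▸ trivial : v ∈ A ∪ B) with hv | hv
    · rw [eq₁ v hv, h₁.1 v hv]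
    · rw [eq₂ v hv, h₂.1 v hv]
  · rcases h.both_mem_or_both_mem hUnion hNoEdge with ⟨hu, hv⟩ | ⟨hu, hv⟩
    · rw [eq₁ u hu, eq₁ v hv]; exact h₁.2 u hu v hv h
    · rw [eq₂ u hu, eq₂ v hv]; exact h₂.2 u hu v hv h

end Colouring

section Clique

variable {V : Type*} {G : SimpleGraph V} {q : V → ℕ}

theorem bddAbove_cliqueWeights [Finite V] (G : SimpleGraph V) (q : V → ℕ) :
    BddAbove {m | ∃ s : Finset V, G.IsClique (s : Set V) ∧ m = ∑ v ∈ s, q v} :=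
  ((Set.finite_range fun s : Finset V => ∑ v ∈ s, q v).subset
    (by rintro _ ⟨s, -, rfl⟩; exact ⟨s, rfl⟩)).bddAbove

theorem sum_le_wCliqueNum [Finite V] {s : Finset V} (hs : G.IsClique (s : Set V)) :
    ∑ v ∈ s, q v ≤ wCliqueNum G q :=
  le_csSup (bddAbove_cliqueWeights G q) ⟨s, hs, rfl⟩

theorem exists_isClique_sum_eq_wCliqueNum [Finite V] (G : SimpleGraph V) (q : V → ℕ) :
    ∃ s : Finset V, G.IsClique (s : Set V) ∧ wCliqueNum G q = ∑ v ∈ s, q v :=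
  Nat.sSup_mem (s := {m | ∃ s : Finset V, G.IsClique (s : Set V) ∧ m = ∑ v ∈ s, q v})
    ⟨0, ∅, by simp⟩ (bddAbove_cliqueWeights G q)

theorem sum_le_wCliqueNum_induce [Finite V] {S : Set V} {s : Finset V}
    (hs : G.IsClique (s : Set V)) (hsS : (s : Set V) ⊆ S) :
    ∑ v ∈ s, q v ≤ wCliqueNum (G.induce S) (fun v => q v) := by
  classical
  have hmap : (s.subtype (· ∈ S)).map (Function.Embedding.subtype _) = s :=
    subtype_map_of_mem fun v hv => hsS hv
  calc ∑ v ∈ s, q v = ∑ v ∈ s.subtype (· ∈ S), q v :=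
        (sum_subtype_of_mem q fun v hv => hsS hv).symm
    _ ≤ _ := sum_le_wCliqueNum <| isClique_induce_iff.2 <| by
        rwa [← Function.Embedding.coe_subtype, ← coe_map, hmap]

theorem wCliqueNum_induce_le [Finite V] (S : Set V) :
    wCliqueNum (G.induce S) (fun v => q v) ≤ wCliqueNum G q := by
  obtain ⟨t, ht, heq⟩ := exists_isClique_sum_eq_wCliqueNum (G.induce S) (fun v => q v)
  calc wCliqueNum (G.induce S) (fun v => q v)
      = ∑ v ∈ t.map (Function.Embedding.subtype _), q v := by rw [heq, sum_map]; rfl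
    _ ≤ _ := sum_le_wCliqueNum <| by rw [coe_map]; exact isClique_induce_iff.1 ht

theorem SimpleGraph.IsClique.subset_or_subset_of_separation {A B : Set V}
    (hUnion : A ∪ B = Set.univ) (hNoEdge : ∀ a ∈ A \ B, ∀ b ∈ B \ A, ¬G.Adj a b) {s : Set V}
    (hs : G.IsClique s) : s ⊆ A ∨ s ⊆ B := by
  by_contra! h
  obtain ⟨⟨a, has, haA⟩, ⟨b, hbs, hbB⟩⟩ := And.imp Set.not_subset.1 Set.not_subset.1 h
  have hab : a ≠ b := by
    rintro rfl
    exact (hUnion ▸ trivial : a ∈ A ∪ B).elim haA hbB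
  rcases (hs has hbs hab).both_mem_or_both_mem hUnion hNoEdge with h' | h'
  exacts [haA h'.1, hbB h'.2]

theorem wCliqueNum_eq_max_induce_of_separation [Finite V] {A B : Set V}
    (hUnion : A ∪ B = Set.univ) (hNoEdge : ∀ a ∈ A \ B, ∀ b ∈ B \ A, ¬G.Adj a b) :
    wCliqueNum G q = max (wCliqueNum (G.induce A) (fun v => q v))
      (wCliqueNum (G.induce B) (fun v => q v)) := by
  refine le_antisymm ?_ (max_le (wCliqueNum_induce_le A) (wCliqueNum_induce_le B))
  obtain ⟨s, hs, heq⟩ := exists_isClique_sum_eq_wCliqueNum G q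
  rw [heq]
  rcases hs.subset_or_subset_of_separation hUnion hNoEdge with hsA | hsB
  · exact le_max_of_le_left (sum_le_wCliqueNum_induce hs hsA)
  · exact le_max_of_le_right (sum_le_wCliqueNum_induce hs hsB)

end Clique

section Modules

variable {V α : Type*} {G : SimpleGraph V} {q : V → ℕ} {L : V → Finset α} {S : Set V}

theorem IsModule.adj_of_adj {M : Set V} (hM : IsModule G M) {u v w : V} (hu : u ∈ M)
    (hv : v ∉ M) (huv : G.Adj v u) (hw : w ∈ M) : G.Adj v w :=
  ((hM.2 v hv).resolve_right fun h => h u hu huv) w hw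

theorem IsWColouringOn.congr {L' : V → Finset α} (hL : IsWColouringOn G q S L)
    (h : ∀ v ∈ S, L v = L' v) : IsWColouringOn G q S L' := by
  rw [isWColouringOn_iff] at hL ⊢
  refine ⟨fun v hv => h v hv ▸ hL.1 v hv, fun u hu v hv huv => ?_⟩
  rw [← h u hu, ← h v hv]
  exact hL.2 u hu v hv huv

def colourSet (L : V → Finset α) (X : Set V) : Set α := ⋃ v ∈ X, (L v : Set α)

theorem coe_subset_colourSet {X : Set V} {v : V} (hv : v ∈ X) :
    (L v : Set α) ⊆ colourSet L X :=
  Set.subset_biUnion_of_mem (u := fun v => (L v : Set α)) hv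

theorem IsWColouringOn.disjoint_colourSet {X : Set V} {v : V} (hL : IsWColouringOn G q S L)
    (hv : v ∈ S) (hXS : X ⊆ S) (hvX : ∀ w ∈ X, G.Adj v w) :
    Disjoint (L v : Set α) (colourSet L X) := by
  rw [isWColouringOn_iff] at hL
  simp only [colourSet, Set.disjoint_iUnion₂_right, disjoint_coe]
  exact fun w hw => hL.2 v hv w (hXS hw) (hvX w hw)

theorem IsWColouringOn.disjoint_colourSet_colourSet {X Y : Set V} (hL : IsWColouringOn G q S L)
    (hXS : X ⊆ S) (hYS : Y ⊆ S) (hXY : ∀ u ∈ X, ∀ v ∈ Y, G.Adj u v) :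
    Disjoint (colourSet L X) (colourSet L Y) :=
  Set.disjoint_iUnion₂_left.2 fun u hu => hL.disjoint_colourSet (hXS hu) hYS (hXY u hu)

theorem IsWColouringOn.wChromaticNumber_induce_le_natCard [Finite α] {X : Set V}
    (hL : IsWColouringOn G q X L) :
    wChromaticNumber (G.induce X) (fun v => q v) ≤ Nat.card (colourSet L X) := by
  classical
  refine IsWColouring.wChromaticNumber_le_natCard (L := fun v => (L v).subtype (· ∈ colourSet L X))
    ⟨fun v => ?_, fun u v h => ?_⟩
  · rw [card_subtype, filter_true_of_mem fun _ ha => coe_subset_colourSet v.2 ha]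
    exact hL.1 v
  · rw [← disjoint_map (Function.Embedding.subtype _), subtype_map, subtype_map]
    exact disjoint_filter_filter (hL.2 h)

theorem IsWColouringOn.recolour {ι : Type*} {X : ι → Set V} (hL : IsWColouringOn G q S L)
    (hmod : ∀ i, IsModule G (X i)) (hdisj : Pairwise (Disjoint on X)) (hXS : ∀ i, X i ⊆ S)
    {L' : V → Finset α} (hoff : ∀ v, (∀ i, v ∉ X i) → L' v = L v)
    (hon : ∀ i, IsWColouringOn G q (X i) L')
    (hsub : ∀ i, ∀ v ∈ X i, (L' v : Set α) ⊆ colourSet L (X i)) :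
    IsWColouringOn G q S L' := by
  have hboundary : ∀ i u v, u ∈ X i → v ∈ S → v ∉ X i → G.Adj u v → Disjoint (L' u) (L' v) := by
    intro i u v hu hv hvi huv
    have hvX : ∀ w ∈ X i, G.Adj v w := fun w => (hmod i).adj_of_adj hu hvi huv.symm
    rw [← disjoint_coe]
    by_cases hv' : ∃ j, v ∈ X j
    · obtain ⟨j, hvj⟩ := hv'
      have hij : i ≠ j := by rintro rfl; exact hvi hvj
      have hcomplete : ∀ w ∈ X i, ∀ w' ∈ X j, G.Adj w w' := fun w hw w' hw' =>
        (hmod j).adj_of_adj hvj (Set.disjoint_left.1 (hdisj hij) hw) (hvX w hw).symm hw'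
      exact (hL.disjoint_colourSet_colourSet (hXS i) (hXS j) hcomplete).mono
        (hsub i u hu) (hsub j v hvj)
    · rw [hoff v (not_exists.1 hv')]
      exact (hL.disjoint_colourSet hv (hXS i) hvX).symm.mono_left (hsub i u hu)
  rw [isWColouringOn_iff] at hL ⊢
  refine ⟨fun v hv => ?_, fun u hu v hv huv => ?_⟩
  · by_cases hv' : ∃ i, v ∈ X i
    · obtain ⟨i, hvi⟩ := hv'
      exact (isWColouringOn_iff.1 (hon i)).1 v hvi
    · rw [hoff v (not_exists.1 hv')]
      exact hL.1 v hv
  · by_cases hu' : ∃ i, u ∈ X i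
    · obtain ⟨i, hui⟩ := hu'
      by_cases hvi : v ∈ X i
      · exact (isWColouringOn_iff.1 (hon i)).2 u hui v hvi huv
      · exact hboundary i u v hui hv hvi huv
    · by_cases hv' : ∃ j, v ∈ X j
      · obtain ⟨j, hvj⟩ := hv'
        exact (hboundary j v u hvj hu (not_exists.1 hu' j) huv.symm).symm
      · rw [hoff u (not_exists.1 hu'), hoff v (not_exists.1 hv')]
        exact hL.2 u hu v hv huv

theorem exists_sigma_embedding_mem {ι : Type*} {β : ι → Type*} {C : ι → Set α}
    (hC : Pairwise (Disjoint on C)) (he : ∀ i, Nonempty (β i ↪ C i)) :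
    ∃ φ : (Σ i, β i) ↪ α, ∀ i b, φ ⟨i, b⟩ ∈ C i :=
  ⟨((Function.Embedding.sigmaMap (Function.Embedding.refl ι) fun i => (he i).some).trans
      ⟨_, Set.sigmaToiUnion_injective C hC⟩).trans (Function.Embedding.subtype _),
    fun i b => ((he i).some b).2⟩

theorem exists_blockColouring [Finite V] {ι : Type*} [Fintype ι] {X : ι → Set V}
    (hdisj : Pairwise (Disjoint on X)) :
    ∃ N : V → Finset (Σ i, Fin (wChromaticNumber (G.induce (X i)) (fun v => q v))),
      (∀ i, IsWColouringOn G q (X i) N) ∧ ∀ i, ∀ v ∈ X i, ∀ t ∈ N v, t.1 = i := by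
  classical
  choose M hM using fun i => exists_isWColouringOn_of_le (G := G) (q := q) (le_refl
    (wChromaticNumber (G.induce (X i)) (fun v => q v)))
  have hindex : ∀ {i j v}, v ∈ X i → v ∈ X j → j = i := fun hi hj => by
    by_contra hne
    exact Set.disjoint_left.1 (hdisj hne) hj hi
  refine ⟨fun v => (univ.filter (v ∈ X ·)).sigma (fun i => M i v), fun i => ?_, ?_⟩
  · refine isWColouringOn_iff.2 ⟨fun v hv => ?_, fun u hu v hv huv => disjoint_left.2 ?_⟩
    · have hsingle : univ.filter (v ∈ X ·) = {i} :=
        eq_singleton_iff_unique_mem.2 ⟨by simpa using hv, fun j hj => hindex hv (by simpa using hj)⟩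
      rw [hsingle, card_sigma, sum_singleton]
      exact (isWColouringOn_iff.1 (hM i)).1 v hv
    · rintro ⟨j, b⟩ hbu hbv
      simp only [mem_sigma, mem_filter, mem_univ, true_and] at hbu hbv
      exact disjoint_left.1 ((isWColouringOn_iff.1 (hM j)).2 u hbu.1 v hbv.1 huv) hbu.2 hbv.2
  · rintro i v hv ⟨j, b⟩ ht
    simp only [mem_sigma, mem_filter, mem_univ, true_and] at ht
    exact hindex hv ht.1

theorem IsWColouringOn.exists_eq_map_on_modules [Finite α] {ι : Type*} {X : ι → Set V}
    (hL : IsWColouringOn G q S L) (hmod : ∀ i, IsModule G (X i))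
    (hdisj : Pairwise (Disjoint on X)) (hcomp : ∀ i j, i ≠ j → ∀ u ∈ X i, ∀ v ∈ X j, G.Adj u v)
    (hXS : ∀ i, X i ⊆ S)
    {N : V → Finset (Σ i, Fin (wChromaticNumber (G.induce (X i)) (fun v => q v)))}
    (hN : ∀ i, IsWColouringOn G q (X i) N) (hblock : ∀ i, ∀ v ∈ X i, ∀ t ∈ N v, t.1 = i) :
    ∃ φ : (Σ i, Fin (wChromaticNumber (G.induce (X i)) (fun v => q v))) ↪ α,
      ∃ L' : V → Finset α, IsWColouringOn G q S L' ∧ ∀ i, ∀ v ∈ X i, L' v = (N v).map φ := by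
  classical
  obtain ⟨φ, hφ⟩ := exists_sigma_embedding_mem (C := fun i => colourSet L (X i))
    (fun i j hij => hL.disjoint_colourSet_colourSet (hXS i) (hXS j) (hcomp i j hij))
    fun i => ⟨(Fin.castLEEmb (hL.mono (hXS i)).wChromaticNumber_induce_le_natCard).trans
      (Finite.equivFin _).symm.toEmbedding⟩
  refine ⟨φ, fun v => if ∃ i, v ∈ X i then (N v).map φ else L v,
    hL.recolour hmod hdisj hXS (fun v hv => if_neg (not_exists.2 hv)) (fun i => ?_)
      (fun i v hv => ?_), fun i v hv => if_pos ⟨i, hv⟩⟩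
  · exact ((hN i).map φ).congr fun v hv => (if_pos ⟨i, hv⟩).symm
  · rw [if_pos ⟨i, hv⟩, coe_map]
    rintro _ ⟨t, ht, rfl⟩
    exact hblock i v hv t ht ▸ hφ t.1 t.2

theorem wChromaticNumber_le_max_induce [Finite V] {A B : Set V} {ι : Type*} [Fintype ι]
    {X : ι → Set V} (hUnion : A ∪ B = Set.univ) (hNoEdge : ∀ a ∈ A \ B, ∀ b ∈ B \ A, ¬G.Adj a b)
    (hmod : ∀ i, IsModule G (X i)) (hdisj : Pairwise (Disjoint on X))
    (hcomp : ∀ i j, i ≠ j → ∀ u ∈ X i, ∀ v ∈ X j, G.Adj u v) (hX : A ∩ B = ⋃ i, X i) :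
    wChromaticNumber G q ≤ max (wChromaticNumber (G.induce A) (fun v => q v))
      (wChromaticNumber (G.induce B) (fun v => q v)) := by
  classical
  have hXA : ∀ i, X i ⊆ A := fun i => (hX ▸ Set.subset_iUnion X i).trans Set.inter_subset_left
  have hXB : ∀ i, X i ⊆ B := fun i => (hX ▸ Set.subset_iUnion X i).trans Set.inter_subset_right
  obtain ⟨L₁, hL₁⟩ := exists_isWColouringOn_of_le (q := q) (S := A) (le_max_left _
    (wChromaticNumber (G.induce B) fun v => q v))
  obtain ⟨L₂, hL₂⟩ := exists_isWColouringOn_of_le (q := q) (S := B) (le_max_right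
    (wChromaticNumber (G.induce A) fun v => q v) _)
  obtain ⟨N, hN, hblock⟩ := exists_blockColouring (G := G) (q := q) hdisj
  obtain ⟨φ₁, L₁', hL₁', hφ₁⟩ := hL₁.exists_eq_map_on_modules hmod hdisj hcomp hXA hN hblock
  obtain ⟨φ₂, L₂', hL₂', hφ₂⟩ := hL₂.exists_eq_map_on_modules hmod hdisj hcomp hXB hN hblock
  obtain ⟨σ, hσ⟩ := Equiv.Perm.exists_extending_pair φ₂ φ₁ φ₂.injective φ₁.injective
  refine wChromaticNumber_le <|
    isWColouring_piecewise hUnion hNoEdge hL₁' (hL₂'.map σ.toEmbedding) fun v hv => ?_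
  obtain ⟨i, hvi⟩ := Set.mem_iUnion.1 (hX ▸ hv)
  rw [hφ₁ i v hvi, hφ₂ i v hvi, Finset.map_map]
  exact congrArg (map · (N v)) (Function.Embedding.ext fun t => (hσ t).symm)

end Modules

theorem stmt11_general {V : Type} [Fintype V] (G : SimpleGraph V) (A B : Set V)
    (hUnion : A ∪ B = Set.univ)
    (hNoEdge : ∀ a ∈ A \ B, ∀ b ∈ B \ A, ¬ G.Adj a b)
    (k : ℕ) (X : Fin k → Set V)
    (hmod : ∀ i, IsModule G (X i))
    (hdisj : ∀ i j, i ≠ j → Disjoint (X i) (X j))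
    (hcomp : ∀ i j, i ≠ j → ∀ u ∈ X i, ∀ v ∈ X j, G.Adj u v)
    (hX : A ∩ B = ⋃ i, X i)
    (q : V → ℕ) :
    wChromaticNumber G q =
      max (wChromaticNumber (G.induce A) (fun v => q v.1))
          (wChromaticNumber (G.induce B) (fun v => q v.1)) ∧
    wCliqueNum G q =
      max (wCliqueNum (G.induce A) (fun v => q v.1))
          (wCliqueNum (G.induce B) (fun v => q v.1)) :=
  ⟨le_antisymm
      (wChromaticNumber_le_max_induce hUnion hNoEdge hmod (fun i j => hdisj i j) hcomp hX)
      (max_le (wChromaticNumber_induce_le A) (wChromaticNumber_induce_le B)),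
    wCliqueNum_eq_max_induce_of_separation hUnion hNoEdge⟩

/-- If `G = G₁ ∪ G₂` where `V(G₁) ∩ V(G₂)` is a clique-separator of modules, then
`χ_q(G) = max {χ_q(G₁), χ_q(G₂)}` and `ω_q(G) = max {ω_q(G₁), ω_q(G₂)}` for every
vertex-weight function `q`. -/
theorem stmt11 {V : Type} [Fintype V] (G : SimpleGraph V) (A B : Set V)
    (hUnion : A ∪ B = Set.univ)
    (hA : (A \ B).Nonempty) (hB : (B \ A).Nonempty)
    (hNoEdge : ∀ a ∈ A \ B, ∀ b ∈ B \ A, ¬ G.Adj a b)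
    (k : ℕ) (X : Fin k → Set V)
    (hmod : ∀ i, IsModule G (X i))
    (hdisj : ∀ i j, i ≠ j → Disjoint (X i) (X j))
    (hcomp : ∀ i j, i ≠ j → ∀ u ∈ X i, ∀ v ∈ X j, G.Adj u v)
    (hX : A ∩ B = ⋃ i, X i)
    (q : V → ℕ) :
    wChromaticNumber G q =
      max (wChromaticNumber (G.induce A) (fun v => q v.1))
          (wChromaticNumber (G.induce B) (fun v => q v.1)) ∧
    wCliqueNum G q =
      max (wCliqueNum (G.induce A) (fun v => q v.1))
          (wCliqueNum (G.induce B) (fun v => q v.1)) :=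
  stmt11_general G A B hUnion hNoEdge k X hmod hdisj hcomp hX q
end
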